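/- arXiv:0902.0351 — 10 statements merged into one kernel-verified Lean document; each statement's English description precedes it below -/
import Mathlib

section
/- Let z₁, z₂, z₃, z₄ ∈ ℂ and let j₁, j₂, j₃, j₄ be positive real numbers satisfying the closure constraint Σᵢ jᵢ N(zᵢ) = 0. Then for every matrix g = [[a,b],[c,d]] with a,b,c,d ∈ ℂ and ad − bc = 1, one has ∏ᵢ ((1+|zᵢ|²)/(|a·zᵢ + b|² + |c·zᵢ + d|²))^{jᵢ} ≤ 1. Moreover, if the vectors N(z₁),…,N(z₄) are not collinear, then equality holds if and only if g is unitary (g*g = 1), i.e. g ∈ SU(2). -/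
/-!
Put `G = gᴴg`. Its coordinates `h₀ = tr G / 2` and `h ∈ ℝ³` (`gramScalar`, `gramVector`) satisfy
`h₀² - |h|² = det G = 1` and `|a z + b|² + |c z + d|² = (1 + |z|²) (h₀ - h ⬝ N(z))`, so the product
equals `exp (-∑ jᵢ log (h₀ - h ⬝ N(zᵢ)))`. With `r = |h|`, the identity `(h₀ - r)(h₀ + r) = 1`
makes the chord of the concave function `s ↦ log (h₀ - s)` over `[-r, r]` the linear function
`s ↦ -(s / r) log (h₀ + r)`; by the closure constraint the chord terms sum to zero, so the sum of
logarithms is `≥ 0`. Equality forces each `h ⬝ N(zᵢ)` to be an endpoint `±r`, i.e. `N(zᵢ) = ±h / r`,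
unless `h = 0`; and `h = 0` together with `h₀² = 1` says `G = 1`.
-/

open Matrix

/-- Inverse stereographic projection: the unit vector `N(z) ∈ ℝ³` associated to `z ∈ ℂ`. -/
noncomputable def Nvec (z : ℂ) : Fin 3 → ℝ :=
  ![-2 * z.re / (1 + ‖z‖ ^ 2),
    2 * z.im / (1 + ‖z‖ ^ 2),
    (1 - ‖z‖ ^ 2) / (1 + ‖z‖ ^ 2)]

/-- The vectors `N(z₁),…,N(z₄)` are collinear if they all lie in `{M, −M}` for some unit
vector `M ∈ ℝ³`. -/
def NCollinear (z : Fin 4 → ℂ) : Prop :=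
  ∃ M : Fin 3 → ℝ, (∑ x, M x ^ 2 = 1) ∧ ∀ i, Nvec (z i) = M ∨ Nvec (z i) = -M

open Real

section UnitVectors

variable {κ : Type*} [Fintype κ]

lemma dotProduct_sq_le_of_dotProduct_self_eq_one {h n : κ → ℝ} (hn : n ⬝ᵥ n = 1) :
    (h ⬝ᵥ n) ^ 2 ≤ h ⬝ᵥ h :=
  calc (h ⬝ᵥ n) ^ 2 ≤ (h ⬝ᵥ h) * (n ⬝ᵥ n) := by
        simpa only [dotProduct, sq] using Finset.sum_mul_sq_le_sq_mul_sq Finset.univ h n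
    _ = h ⬝ᵥ h := by rw [hn, mul_one]

lemma eq_inv_smul_of_dotProduct_eq {h n : κ → ℝ} {r : ℝ} (hr : r ≠ 0) (hn : n ⬝ᵥ n = 1)
    (hh : h ⬝ᵥ h = r ^ 2) (hs : h ⬝ᵥ n = r) : n = r⁻¹ • h := by
  have hzero : (r • n - h) ⬝ᵥ (r • n - h) = 0 := by
    simp only [sub_dotProduct, dotProduct_sub, smul_dotProduct, dotProduct_smul, hn, hh,
      dotProduct_comm n h, hs, smul_eq_mul]
    ring
  rw [dotProduct_self_eq_zero, sub_eq_zero] at hzero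
  rw [← hzero, smul_smul, inv_mul_cancel₀ hr, one_smul]

end UnitVectors

section LogChord

variable {h₀ r s : ℝ}

lemma log_sub_chord_decomposition (hr : 0 < r) (hh₀ : h₀ ^ 2 = 1 + r ^ 2) :
    h₀ - s = ((r + s) / (2 * r)) • (h₀ - r) + ((r - s) / (2 * r)) • (h₀ + r) ∧
      -(s / r) * log (h₀ + r) =
        ((r + s) / (2 * r)) • log (h₀ - r) + ((r - s) / (2 * r)) • log (h₀ + r) := by
  have hlog : log (h₀ - r) = -log (h₀ + r) := by
    rw [← log_inv,
      eq_inv_of_mul_eq_one_left (a := h₀ - r) (b := h₀ + r) (by linear_combination hh₀)]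
  rw [hlog, smul_eq_mul, smul_eq_mul, smul_eq_mul, smul_eq_mul]
  constructor <;> field_simp <;> ring

lemma neg_div_mul_log_le_log_sub (hr : 0 ≤ r) (hh₀ : h₀ ^ 2 = 1 + r ^ 2) (hh₀pos : 0 < h₀)
    (hs : s ^ 2 ≤ r ^ 2) : -(s / r) * log (h₀ + r) ≤ log (h₀ - s) := by
  obtain rfl | hr := hr.eq_or_lt
  · obtain rfl : s = 0 := by nlinarith
    obtain rfl : h₀ = 1 := by nlinarith
    simp
  obtain ⟨hs₁, hs₂⟩ := abs_le_of_sq_le_sq' hs hr.le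
  obtain ⟨hsplit, hchord⟩ := log_sub_chord_decomposition (s := s) hr hh₀
  rw [hchord, hsplit]
  exact strictConcaveOn_log_Ioi.concaveOn.2 (by simp; nlinarith) (by simp; linarith)
    (by field_simp; linarith) (by field_simp; linarith) (by field_simp; ring)

lemma eq_or_eq_neg_of_log_sub_eq (hr : 0 < r) (hh₀ : h₀ ^ 2 = 1 + r ^ 2) (hh₀pos : 0 < h₀)
    (hs : s ^ 2 ≤ r ^ 2) (heq : log (h₀ - s) = -(s / r) * log (h₀ + r)) : s = r ∨ s = -r := by
  obtain ⟨hs₁, hs₂⟩ := abs_le_of_sq_le_sq' hs hr.le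
  by_contra! hne
  have hlt₁ : -r < s := hs₁.lt_of_ne (Ne.symm hne.2)
  have hlt₂ : s < r := hs₂.lt_of_ne hne.1
  obtain ⟨hsplit, hchord⟩ := log_sub_chord_decomposition (s := s) hr hh₀
  rw [hchord, hsplit] at heq
  exact (strictConcaveOn_log_Ioi.2 (by simp; nlinarith) (by simp; linarith) (by linarith)
    (by field_simp; linarith) (by field_simp; linarith) (by field_simp; ring)).ne heq.symm

end LogChord

section ChordGap

variable {κ : Type*} [Fintype κ] {h n : κ → ℝ} {h₀ : ℝ}

lemma dotProduct_self_nonneg_of_real (h : κ → ℝ) : 0 ≤ h ⬝ᵥ h := by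
  simpa using dotProduct_self_star_nonneg h

lemma sq_sqrt_dotProduct_self (h : κ → ℝ) : √(h ⬝ᵥ h) ^ 2 = h ⬝ᵥ h :=
  sq_sqrt (dotProduct_self_nonneg_of_real h)

lemma sqrt_dotProduct_self_pos (hh : h ≠ 0) : 0 < √(h ⬝ᵥ h) :=
  sqrt_pos.2 <| (dotProduct_self_star_pos_iff.2 hh).trans_eq (by simp)

lemma sub_dotProduct_pos (hh₀ : h₀ ^ 2 = 1 + h ⬝ᵥ h) (hh₀pos : 0 < h₀) (hn : n ⬝ᵥ n = 1) :
    0 < h₀ - h ⬝ᵥ n := by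
  nlinarith [dotProduct_sq_le_of_dotProduct_self_eq_one (h := h) hn]

lemma log_sub_dotProduct_add_nonneg (hh₀ : h₀ ^ 2 = 1 + h ⬝ᵥ h) (hh₀pos : 0 < h₀)
    (hn : n ⬝ᵥ n = 1) :
    0 ≤ log (h₀ - h ⬝ᵥ n) + log (h₀ + √(h ⬝ᵥ h)) / √(h ⬝ᵥ h) * h ⬝ᵥ n := by
  rw [← sq_sqrt_dotProduct_self] at hh₀
  have hs := sq_sqrt_dotProduct_self h ▸ dotProduct_sq_le_of_dotProduct_self_eq_one (h := h) hn
  have := neg_div_mul_log_le_log_sub (sqrt_nonneg _) hh₀ hh₀pos hs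
  linarith [show -(h ⬝ᵥ n / √(h ⬝ᵥ h)) * log (h₀ + √(h ⬝ᵥ h)) =
    -(log (h₀ + √(h ⬝ᵥ h)) / √(h ⬝ᵥ h) * h ⬝ᵥ n) by ring]

lemma eq_or_eq_neg_of_log_sub_dotProduct_add_eq_zero (hh₀ : h₀ ^ 2 = 1 + h ⬝ᵥ h)
    (hh₀pos : 0 < h₀) (hn : n ⬝ᵥ n = 1) (hh : h ≠ 0)
    (heq : log (h₀ - h ⬝ᵥ n) + log (h₀ + √(h ⬝ᵥ h)) / √(h ⬝ᵥ h) * h ⬝ᵥ n = 0) :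
    n = (√(h ⬝ᵥ h))⁻¹ • h ∨ n = -((√(h ⬝ᵥ h))⁻¹ • h) := by
  set r := √(h ⬝ᵥ h)
  have hr : 0 < r := sqrt_dotProduct_self_pos hh
  have hhr : h ⬝ᵥ h = r ^ 2 := (sq_sqrt_dotProduct_self h).symm
  rw [hhr] at hh₀
  have hs := hhr ▸ dotProduct_sq_le_of_dotProduct_self_eq_one (h := h) hn
  rcases eq_or_eq_neg_of_log_sub_eq hr hh₀ hh₀pos hs (by linear_combination heq) with hs | hs
  · exact .inl (eq_inv_smul_of_dotProduct_eq hr.ne' hn hhr hs)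
  · refine .inr ?_
    rw [← smul_neg]
    exact eq_inv_smul_of_dotProduct_eq hr.ne' hn (by simpa using hhr) (by simp [hs])

end ChordGap

section WeightedSum

variable {ι κ : Type*} [Fintype ι] [Fintype κ] {N : ι → κ → ℝ} {j : ι → ℝ} {h : κ → ℝ}
  {h₀ : ℝ}

lemma sum_mul_add_mul_dotProduct_of_sum_smul_eq_zero (hclo : ∑ i, j i • N i = 0)
    (f : ι → ℝ) (c : ℝ) : ∑ i, j i * (f i + c * h ⬝ᵥ N i) = ∑ i, j i * f i := by
  have hbal : ∑ i, j i * h ⬝ᵥ N i = 0 := by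
    simpa [dotProduct_sum, dotProduct_smul] using congrArg (h ⬝ᵥ ·) hclo
  simp only [mul_add, Finset.sum_add_distrib, mul_left_comm (j _) c, ← Finset.mul_sum, hbal,
    mul_zero, add_zero]

lemma sum_mul_log_sub_dotProduct_nonneg (hN : ∀ i, N i ⬝ᵥ N i = 1) (hj : ∀ i, 0 ≤ j i)
    (hclo : ∑ i, j i • N i = 0) (hh₀ : h₀ ^ 2 = 1 + h ⬝ᵥ h) (hh₀pos : 0 < h₀) :
    0 ≤ ∑ i, j i * log (h₀ - h ⬝ᵥ N i) := by
  rw [← sum_mul_add_mul_dotProduct_of_sum_smul_eq_zero (h := h) hclo _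
    (log (h₀ + √(h ⬝ᵥ h)) / √(h ⬝ᵥ h))]
  exact Finset.sum_nonneg fun i _ =>
    mul_nonneg (hj i) (log_sub_dotProduct_add_nonneg hh₀ hh₀pos (hN i))

lemma exists_eq_or_eq_neg_of_sum_mul_log_sub_dotProduct_eq_zero (hN : ∀ i, N i ⬝ᵥ N i = 1)
    (hj : ∀ i, 0 < j i) (hclo : ∑ i, j i • N i = 0) (hh₀ : h₀ ^ 2 = 1 + h ⬝ᵥ h)
    (hh₀pos : 0 < h₀) (hsum : ∑ i, j i * log (h₀ - h ⬝ᵥ N i) = 0) (hh : h ≠ 0) :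
    ∃ M : κ → ℝ, M ⬝ᵥ M = 1 ∧ ∀ i, N i = M ∨ N i = -M := by
  rw [← sum_mul_add_mul_dotProduct_of_sum_smul_eq_zero (h := h) hclo _
    (log (h₀ + √(h ⬝ᵥ h)) / √(h ⬝ᵥ h)), Finset.sum_eq_zero_iff_of_nonneg fun i _ =>
      mul_nonneg (hj i).le (log_sub_dotProduct_add_nonneg hh₀ hh₀pos (hN i))] at hsum
  refine ⟨(√(h ⬝ᵥ h))⁻¹ • h, ?_, fun i => eq_or_eq_neg_of_log_sub_dotProduct_add_eq_zero hh₀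
    hh₀pos (hN i) hh ((mul_eq_zero.1 (hsum i (Finset.mem_univ i))).resolve_left (hj i).ne')⟩
  have hr := (sqrt_dotProduct_self_pos hh).ne'
  rw [smul_dotProduct, dotProduct_smul, smul_smul, smul_eq_mul]
  field_simp
  exact (sq_sqrt_dotProduct_self h).symm

end WeightedSum

lemma Nvec_dotProduct_self (w : ℂ) : Nvec w ⬝ᵥ Nvec w = 1 := by
  have hw : ‖w‖ ^ 2 = w.re ^ 2 + w.im ^ 2 := by rw [Complex.sq_norm, Complex.normSq_apply]; ring
  have hpos : 0 < 1 + ‖w‖ ^ 2 := by positivity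
  simp only [dotProduct, Fin.sum_univ_three, Nvec, cons_val_zero, cons_val_one, cons_val_two,
    head_cons, tail_cons]
  field_simp
  rw [hw]
  ring

section Gram

open ComplexConjugate

variable (a b c d : ℂ)

/-- With `p = |a|² + |c|²`, `q = ā b + c̄ d`, `r = |b|² + |d|²` we have `gᴴ g = !![p, q; q̄, r]`;
`gramScalar = (p + r) / 2` and `gramVector = (Re q, -Im q, (p - r) / 2)` are its coordinates
in the basis of the identity and the (suitably signed) Pauli matrices, so that
`det (gᴴ g) = gramScalar² - |gramVector|²`. -/
noncomputable def gramScalar : ℝ := ((‖a‖ ^ 2 + ‖c‖ ^ 2) + (‖b‖ ^ 2 + ‖d‖ ^ 2)) / 2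

noncomputable def gramVector : Fin 3 → ℝ :=
  ![(conj a * b + conj c * d).re, -(conj a * b + conj c * d).im,
    ((‖a‖ ^ 2 + ‖c‖ ^ 2) - (‖b‖ ^ 2 + ‖d‖ ^ 2)) / 2]

lemma norm_sq_add_norm_sq_eq (w : ℂ) :
    ‖a * w + b‖ ^ 2 + ‖c * w + d‖ ^ 2 =
      (gramScalar a b c d - gramVector a b c d ⬝ᵥ Nvec w) * (1 + ‖w‖ ^ 2) := by
  have hpos : 0 < 1 + ‖w‖ ^ 2 := by positivity
  simp only [gramScalar, gramVector, dotProduct, Fin.sum_univ_three, Nvec, cons_val_zero,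
    cons_val_one, cons_val_two, head_cons, tail_cons]
  field_simp
  simp only [Complex.sq_norm, Complex.normSq_apply, Complex.mul_re, Complex.mul_im,
    Complex.add_re, Complex.add_im, Complex.conj_re, Complex.conj_im]
  ring

lemma gramScalar_sq :
    gramScalar a b c d ^ 2 = ‖a * d - b * c‖ ^ 2 + gramVector a b c d ⬝ᵥ gramVector a b c d := by
  simp only [gramScalar, gramVector, dotProduct, Fin.sum_univ_three, cons_val_zero,
    cons_val_one, cons_val_two, head_cons, tail_cons, Complex.sq_norm, Complex.normSq_apply,
    Complex.mul_re, Complex.mul_im, Complex.add_re, Complex.add_im, Complex.sub_re, Complex.sub_im,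
    Complex.conj_re, Complex.conj_im]
  ring

lemma conjTranspose_mul_self_eq_one_iff :
    (!![a, b; c, d])ᴴ * !![a, b; c, d] = 1 ↔ gramScalar a b c d = 1 ∧ gramVector a b c d = 0 := by
  have hg : (!![a, b; c, d])ᴴ * !![a, b; c, d] =
      !![((‖a‖ ^ 2 + ‖c‖ ^ 2 : ℝ) : ℂ), conj a * b + conj c * d;
        conj (conj a * b + conj c * d), ((‖b‖ ^ 2 + ‖d‖ ^ 2 : ℝ) : ℂ)] := by
    ext i k
    fin_cases i <;> fin_cases k <;>
      simp [mul_apply, Fin.sum_univ_two, Complex.mul_conj', mul_comm]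
  rw [hg, one_fin_two, gramScalar, gramVector]
  generalize conj a * b + conj c * d = q, ‖a‖ ^ 2 + ‖c‖ ^ 2 = p, ‖b‖ ^ 2 + ‖d‖ ^ 2 = r
  simp [funext_iff, Fin.forall_fin_succ, Complex.ext_iff (z := q)]
  constructor
  · rintro ⟨⟨hp, hq⟩, -, hr⟩
    exact ⟨by linarith, hq.1, hq.2, by linarith⟩
  · rintro ⟨hsum, hre, him, hdiff⟩
    exact ⟨⟨by linarith, hre, him⟩, ⟨hre, him⟩, by linarith⟩

end Gram

lemma prod_inv_rpow_eq_exp_neg_sum {ι : Type*} (s : Finset ι) {x : ι → ℝ} (y : ι → ℝ)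
    (hx : ∀ i ∈ s, 0 < x i) : ∏ i ∈ s, (x i)⁻¹ ^ y i = exp (-∑ i ∈ s, y i * log (x i)) := by
  rw [← Finset.sum_neg_distrib, exp_sum]
  refine Finset.prod_congr rfl fun i hi => ?_
  rw [rpow_def_of_pos (inv_pos.2 (hx i hi)), log_inv, neg_mul, mul_comm]

lemma div_norm_sq_add_norm_sq_eq_inv (a b c d w : ℂ) :
    (1 + ‖w‖ ^ 2) / (‖a * w + b‖ ^ 2 + ‖c * w + d‖ ^ 2) =
      (gramScalar a b c d - gramVector a b c d ⬝ᵥ Nvec w)⁻¹ := by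
  rw [norm_sq_add_norm_sq_eq, div_mul_cancel_right₀ (by positivity)]

/-- On the constraint surface `Σᵢ jᵢ N(zᵢ) = 0`, the factor
`∏ᵢ ((1+|zᵢ|²)/(|a zᵢ + b|² + |c zᵢ + d|²))^{jᵢ}` is `≤ 1` for every `g ∈ SL(2,ℂ)`,
and if the `N(zᵢ)` are not collinear, it equals `1` iff `g ∈ SU(2)`. -/
theorem rho_le_one_on_constraint_surface
    (z : Fin 4 → ℂ) (j : Fin 4 → ℝ) (hj : ∀ i, 0 < j i)
    (hclo : ∑ i, j i • Nvec (z i) = 0)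
    (a b c d : ℂ) (hdet : a * d - b * c = 1) :
    (∏ i, ((1 + ‖z i‖ ^ 2) /
        (‖a * z i + b‖ ^ 2 + ‖c * z i + d‖ ^ 2)) ^ (j i)) ≤ 1 ∧
    (¬ NCollinear z →
      ((∏ i, ((1 + ‖z i‖ ^ 2) /
          (‖a * z i + b‖ ^ 2 + ‖c * z i + d‖ ^ 2)) ^ (j i)) = 1 ↔
        (!![a, b; c, d])ᴴ * !![a, b; c, d] = 1)) := by
  have hh₀ : gramScalar a b c d ^ 2 = 1 + gramVector a b c d ⬝ᵥ gramVector a b c d := by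
    rw [gramScalar_sq, hdet, norm_one, one_pow]
  rw [conjTranspose_mul_self_eq_one_iff]
  set h₀ := gramScalar a b c d
  set h := gramVector a b c d
  have hh₀pos : 0 < h₀ := by
    have : 0 ≤ h₀ := by simp only [h₀, gramScalar]; positivity
    nlinarith [dotProduct_self_nonneg_of_real h]
  have hN (i : Fin 4) := Nvec_dotProduct_self (z i)
  have hprod : ∏ i, ((1 + ‖z i‖ ^ 2) / (‖a * z i + b‖ ^ 2 + ‖c * z i + d‖ ^ 2)) ^ j i =
      exp (-∑ i, j i * log (h₀ - h ⬝ᵥ Nvec (z i))) := by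
    simp only [div_norm_sq_add_norm_sq_eq_inv]
    exact prod_inv_rpow_eq_exp_neg_sum _ _ fun i _ => sub_dotProduct_pos hh₀ hh₀pos (hN i)
  rw [hprod, exp_le_one_iff, neg_nonpos, exp_eq_one_iff, neg_eq_zero]
  refine ⟨sum_mul_log_sub_dotProduct_nonneg hN (fun i => (hj i).le) hclo hh₀ hh₀pos,
    fun hNC => ⟨fun hsum => ?_, fun ⟨h₀_eq, h_eq⟩ => by simp [h₀_eq, h_eq]⟩⟩
  have h_eq : h = 0 := by
    by_contra hne
    obtain ⟨M, hM, hNM⟩ := exists_eq_or_eq_neg_of_sum_mul_log_sub_dotProduct_eq_zero hN hj hclo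
      hh₀ hh₀pos hsum hne
    exact hNC ⟨M, by simpa [dotProduct, sq] using hM, hNM⟩
  refine ⟨?_, h_eq⟩
  nlinarith [show h ⬝ᵥ h = 0 by simp [h_eq]]
end

section
/- Let j₁, j₂, j₃, j₄ be positive real numbers such that Σᵢ εᵢ jᵢ ≠ 0 for every choice of signs εᵢ ∈ {+1,−1} (regularity) and 2jᵢ < j₁+j₂+j₃+j₄ for every i. Let z₁, z₂, z₃, z₄ ∈ ℂ be pairwise distinct. Then there exist a,b,c,d ∈ ℂ with ad − bc = 1 such that c·zᵢ + d ≠ 0 for all i and Σᵢ jᵢ N((a·zᵢ + b)/(c·zᵢ + d)) = 0. (Every stable configuration lies on the SL(2,ℂ)-orbit of the constraint surface: surjectivity part of the Guillemin–Sternberg isomorphism for 4-gons.) -/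
/-
Write the point `(x, eᵗ)` of the upper half-space model of hyperbolic 3-space as `(x, t) ∈ ℂ × ℝ`,
and let `F` be the `j`-weighted sum of the Busemann functions of the ideal points `zᵢ`. Then
`F ≥ (Σ jₖ) t` everywhere and `F ≥ (Σ jₖ) log ρ` at distance `≥ ρ` from all `zᵢ`; as `t → -∞` at
most one `zᵢ` is near `x`, and there `F` grows like `(Σ jₖ - 2 jᵢ) (-t)`. So the stability
inequalities make `F` proper, and it has a minimum. The affine map `w ↦ (w - x) / eᵗ`, an element
of `SL(2,ℂ)`, moves the minimum to `(0, 0)`, and there the three partial derivatives of `F` are,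
up to sign, the coordinates of `Σ jᵢ N(wᵢ)`.
-/

open Matrix

open Filter Topology Real

/-- The Busemann function of the ideal point `w` at `(x, exp t)`, in the upper half-space model. -/
noncomputable def busemann (w : ℂ) (p : ℂ × ℝ) : ℝ :=
  log (‖w - p.1‖ ^ 2 + exp (2 * p.2)) - p.2

theorem continuous_busemann (w : ℂ) : Continuous (busemann w) := by
  refine Continuous.sub (Continuous.log (by fun_prop) fun p => ?_) continuous_snd
  positivity

theorem snd_le_busemann (w : ℂ) (p : ℂ × ℝ) : p.2 ≤ busemann w p := by
  have : 2 * p.2 ≤ log (‖w - p.1‖ ^ 2 + exp (2 * p.2)) := by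
    rw [le_log_iff_exp_le (by positivity)]
    linarith [sq_nonneg ‖w - p.1‖]
  unfold busemann; linarith

theorem two_mul_log_sub_snd_le_busemann {w : ℂ} {p : ℂ × ℝ} {ρ : ℝ} (hρ : 0 < ρ)
    (h : ρ ≤ ‖w - p.1‖) : 2 * log ρ - p.2 ≤ busemann w p := by
  have : 2 * log ρ ≤ log (‖w - p.1‖ ^ 2 + exp (2 * p.2)) := by
    rw [← log_rpow hρ]
    exact log_le_log (by positivity) (by rw [rpow_two]; nlinarith [exp_pos (2 * p.2)])
  unfold busemann; linarith

theorem log_le_busemann {w : ℂ} {p : ℂ × ℝ} {ρ : ℝ} (hρ : 0 < ρ) (h : ρ ≤ ‖w - p.1‖) :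
    log ρ ≤ busemann w p := by
  linarith [snd_le_busemann w p, two_mul_log_sub_snd_le_busemann hρ h]

theorem busemann_affine (w x₀ x : ℂ) (t₀ t : ℝ) :
    busemann w (x₀ + exp t₀ * x, t₀ + t) = busemann ((w - x₀) / exp t₀) (x, t) + t₀ := by
  have hs : (exp t₀ : ℂ) ≠ 0 := by exact_mod_cast (exp_pos t₀).ne'
  have hnorm : ‖w - (x₀ + exp t₀ * x)‖ ^ 2 = exp t₀ ^ 2 * ‖(w - x₀) / exp t₀ - x‖ ^ 2 := by
    rw [show w - (x₀ + exp t₀ * x) = exp t₀ * ((w - x₀) / exp t₀ - x) by field_simp; ring,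
      norm_mul, mul_pow, Complex.norm_real, norm_of_nonneg (exp_pos t₀).le]
  have hexp : exp (2 * (t₀ + t)) = exp t₀ ^ 2 * exp (2 * t) := by
    rw [← exp_nat_mul, ← exp_add]; ring_nf
  simp only [busemann, hnorm, hexp, ← mul_add]
  rw [log_mul (by positivity) (by positivity), log_pow, log_exp]
  push_cast; ring

theorem hasDerivAt_busemann_translate (w v : ℂ) :
    HasDerivAt (fun u : ℝ => busemann w ((u : ℂ) * v, 0))
      (-2 * inner ℝ w v / (1 + ‖w‖ ^ 2)) 0 := by
  have hline : HasDerivAt (fun u : ℝ => w - (u : ℂ) * v) (-v) 0 := by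
    simpa using ((hasDerivAt_id (0 : ℝ)).ofReal_comp.mul_const v).const_sub w
  refine (((hline.norm_sq.add_const 1).log (by positivity)).congr_deriv ?_).congr_of_eventuallyEq
    (.of_forall fun u => ?_)
  · rw [Complex.ofReal_zero, zero_mul, sub_zero, inner_neg_right]; ring
  · simp [busemann]

theorem hasDerivAt_busemann_dilate (w : ℂ) :
    HasDerivAt (fun t : ℝ => busemann w (0, t)) ((1 - ‖w‖ ^ 2) / (1 + ‖w‖ ^ 2)) 0 := by
  have hexp : HasDerivAt (fun t : ℝ => ‖w‖ ^ 2 + exp (2 * t)) 2 0 := by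
    simpa using (((hasDerivAt_id (0 : ℝ)).const_mul 2).exp).const_add (‖w‖ ^ 2)
  refine (((hexp.log (by positivity)).sub (hasDerivAt_id 0)).congr_deriv ?_).congr_of_eventuallyEq
    (.of_forall fun t => ?_)
  · rw [mul_zero, exp_zero]; field_simp; ring
  · simp [busemann]

section potential

variable {ι : Type*} [Fintype ι]

noncomputable def potential (j : ι → ℝ) (z : ι → ℂ) (p : ℂ × ℝ) : ℝ :=
  ∑ i, j i * busemann (z i) p

theorem continuous_potential (j : ι → ℝ) (z : ι → ℂ) : Continuous (potential j z) :=
  continuous_finsetSum _ fun i _ => continuous_const.mul (continuous_busemann (z i))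

theorem potential_affine (j : ι → ℝ) (z : ι → ℂ) (x₀ x : ℂ) (t₀ t : ℝ) :
    potential j z (x₀ + exp t₀ * x, t₀ + t) =
      potential j (fun i => (z i - x₀) / exp t₀) (x, t) + (∑ i, j i) * t₀ := by
  simp only [potential, busemann_affine, mul_add, Finset.sum_add_distrib, Finset.sum_mul]

theorem potential_rescale_zero_le {j : ι → ℝ} {z : ι → ℂ} {x₀ : ℂ} {t₀ : ℝ}
    (hmin : ∀ p, potential j z (x₀, t₀) ≤ potential j z p) (p : ℂ × ℝ) :
    potential j (fun i => (z i - x₀) / exp t₀) 0 ≤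
      potential j (fun i => (z i - x₀) / exp t₀) p := by
  have h0 := potential_affine j z x₀ 0 t₀ 0
  have hp := potential_affine j z x₀ p.1 t₀ p.2
  simp only [mul_zero, add_zero] at h0
  have := hmin (x₀ + exp t₀ * p.1, t₀ + p.2)
  exact le_of_add_le_add_right (h0 ▸ hp ▸ this)

theorem sum_smul_Nvec_eq_zero_of_forall_le {j : ι → ℝ} {w : ι → ℂ}
    (hmin : ∀ p, potential j w 0 ≤ potential j w p) : ∑ i, j i • Nvec (w i) = 0 := by
  have translate (v : ℂ) : ∑ i, j i * (-2 * inner ℝ (w i) v / (1 + ‖w i‖ ^ 2)) = 0 :=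
    IsLocalMin.hasDerivAt_eq_zero
      (.of_forall fun u => by simpa [potential, Prod.mk_zero_zero] using hmin ((u : ℂ) * v, 0))
      (HasDerivAt.fun_sum fun i _ => (hasDerivAt_busemann_translate (w i) v).const_mul (j i))
  have dilate : ∑ i, j i * ((1 - ‖w i‖ ^ 2) / (1 + ‖w i‖ ^ 2)) = 0 :=
    IsLocalMin.hasDerivAt_eq_zero
      (.of_forall fun t => by simpa [potential, Prod.mk_zero_zero] using hmin (0, t))
      (HasDerivAt.fun_sum fun i _ => (hasDerivAt_busemann_dilate (w i)).const_mul (j i))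
  have h1 := translate 1
  have hI := translate Complex.I
  simp only [Complex.inner] at h1 hI
  ext k
  fin_cases k
  · simpa [Nvec] using h1
  · simpa [Nvec, neg_div] using hI
  · simpa [Nvec] using dilate

theorem mul_snd_le_potential {j : ι → ℝ} (hj : ∀ i, 0 ≤ j i) (z : ι → ℂ) (p : ℂ × ℝ) :
    (∑ i, j i) * p.2 ≤ potential j z p := by
  rw [Finset.sum_mul]
  exact Finset.sum_le_sum fun i _ => mul_le_mul_of_nonneg_left (snd_le_busemann _ _) (hj i)

theorem mul_log_le_potential {j : ι → ℝ} (hj : ∀ i, 0 ≤ j i) {z : ι → ℂ} {p : ℂ × ℝ} {ρ : ℝ}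
    (hρ : 0 < ρ) (hfar : ∀ i, ρ ≤ ‖z i - p.1‖) : (∑ i, j i) * log ρ ≤ potential j z p := by
  rw [Finset.sum_mul]
  exact Finset.sum_le_sum fun i _ =>
    mul_le_mul_of_nonneg_left (log_le_busemann hρ (hfar i)) (hj i)

theorem le_potential_of_forall_ne {j : ι → ℝ} (hj : ∀ i, 0 ≤ j i) {z : ι → ℂ} {p : ℂ × ℝ}
    {ρ : ℝ} (hρ : 0 < ρ) {i₀ : ι} (hfar : ∀ k ≠ i₀, ρ ≤ ‖z k - p.1‖) :
    j i₀ * p.2 + (∑ i, j i - j i₀) * (2 * log ρ - p.2) ≤ potential j z p := by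
  classical
  rw [← Finset.sum_erase_eq_sub (Finset.mem_univ i₀), Finset.sum_mul, potential,
    ← Finset.add_sum_erase _ _ (Finset.mem_univ i₀)]
  gcongr with k hk
  · exact hj i₀
  · exact snd_le_busemann _ _
  · exact hj k
  · exact two_mul_log_sub_snd_le_busemann hρ (hfar k (Finset.ne_of_mem_erase hk))

end potential

theorem exists_pos_forall_ne_le_dist {ι α : Type*} [Finite ι] [Nonempty ι] [MetricSpace α]
    {z : ι → α} (hz : Function.Injective z) :
    ∃ δ > 0, ∀ x, ∃ i₀, ∀ k ≠ i₀, δ ≤ dist (z k) x := by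
  obtain ⟨δ, hδ, hsep⟩ : ∃ δ > 0, ∀ i k, i ≠ k → 2 * δ ≤ dist (z i) (z k) := by
    have : ∀ᶠ δ in 𝓝[>] (0 : ℝ), 0 < δ ∧ ∀ i k, i ≠ k → 2 * δ ≤ dist (z i) (z k) := by
      refine eventually_mem_nhdsWithin.and
        (eventually_all.2 fun i => eventually_all.2 fun k => ?_)
      by_cases hik : i = k
      · exact .of_forall fun _ h => absurd hik h
      · have hpos := dist_pos.2 (hz.ne hik)
        filter_upwards [nhdsWithin_le_nhds (eventually_lt_nhds (half_pos hpos))] with δ hδ _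
        linarith
    exact this.exists
  refine ⟨δ, hδ, fun x => ?_⟩
  by_cases hnear : ∃ i, dist (z i) x < δ
  · obtain ⟨i₀, hi₀⟩ := hnear
    refine ⟨i₀, fun k hk => ?_⟩
    linarith [hsep k i₀ hk, dist_triangle_right (z k) (z i₀) x]
  · simp only [not_exists, not_lt] at hnear
    exact ⟨Classical.arbitrary ι, fun k _ => hnear k⟩

theorem tendsto_potential_cocompact {ι : Type*} [Fintype ι] [Nonempty ι] {j : ι → ℝ}
    (hj : ∀ i, 0 < j i) (hstable : ∀ i, 2 * j i < ∑ k, j k) {z : ι → ℂ}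
    (hz : Function.Injective z) : Tendsto (potential j z) (cocompact (ℂ × ℝ)) atTop := by
  have hj₀ (i : ι) : 0 ≤ j i := (hj i).le
  have hJ : 0 < ∑ i, j i := Finset.sum_pos (fun i _ => hj i) Finset.univ_nonempty
  rw [← coprod_cocompact, cocompact_eq_atBot_atTop (α := ℝ), Filter.coprod, comap_sup,
    tendsto_sup, tendsto_sup]
  refine ⟨?horizontal, ?down, ?up⟩
  case horizontal =>
    refine tendsto_atTop.2 fun C => ?_
    have hfar : ∀ᶠ x in cocompact ℂ, ∀ i, exp (C / ∑ i, j i) ≤ ‖z i - x‖ :=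
      eventually_all.2 fun i => by
        simpa [dist_eq_norm] using
          (tendsto_dist_left_cocompact_atTop (z i)).eventually_ge_atTop (exp (C / ∑ i, j i))
    filter_upwards [hfar.comap Prod.fst] with p hp
    have := mul_log_le_potential hj₀ (exp_pos _) hp
    rwa [log_exp, mul_div_cancel₀ _ hJ.ne'] at this
  case down =>
    obtain ⟨δ, hδ, hsep⟩ := exists_pos_forall_ne_le_dist hz
    refine tendsto_atTop.2 fun C => ?_
    have hline (i₀ : ι) :
        Tendsto (fun t => j i₀ * t + (∑ i, j i - j i₀) * (2 * log δ - t)) atBot atTop :=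
      (tendsto_atTop_add_const_right _ (2 * (∑ i, j i - j i₀) * log δ)
        (tendsto_neg_atBot_atTop.const_mul_atTop (sub_pos.2 (hstable i₀)))).congr
        fun t => by ring
    filter_upwards [(eventually_all.2 fun i₀ => (hline i₀).eventually_ge_atTop C).comap Prod.snd]
      with p hp
    obtain ⟨i₀, hi₀⟩ := hsep p.1
    exact (hp i₀).trans
      (le_potential_of_forall_ne hj₀ hδ fun k hk => by simpa [dist_eq_norm] using hi₀ k hk)
  case up =>
    exact tendsto_atTop_mono (mul_snd_le_potential hj₀ z) (tendsto_comap.const_mul_atTop hJ)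

theorem exists_mobius_eq_affine (x₀ : ℂ) (t : ℝ) :
    ∃ a b c d : ℂ, a * d - b * c = 1 ∧
      ∀ w, c * w + d ≠ 0 ∧ (a * w + b) / (c * w + d) = (w - x₀) / exp t := by
  set r : ℂ := Complex.exp (t / 2)
  have hr : r ≠ 0 := Complex.exp_ne_zero _
  have hr2 : r * r = exp t := by
    rw [← Complex.exp_add, Complex.ofReal_exp]; ring_nf
  refine ⟨r⁻¹, -x₀ * r⁻¹, 0, r, by field_simp; ring, fun w => ⟨by simpa using hr, ?_⟩⟩
  rw [← hr2, zero_mul, zero_add]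
  field_simp
  ring

theorem stable_orbit_meets_constraint_surface_general
    (j : Fin 4 → ℝ) (hj : ∀ i, 0 < j i)
    (hineq : ∀ i, 2 * j i < ∑ k, j k)
    (z : Fin 4 → ℂ) (hz : ∀ i k, i ≠ k → z i ≠ z k) :
    ∃ a b c d : ℂ, a * d - b * c = 1 ∧ (∀ i, c * z i + d ≠ 0) ∧
      ∑ i, j i • Nvec ((a * z i + b) / (c * z i + d)) = 0 := by
  have hinj : Function.Injective z := fun i k h => by_contra fun hik => hz i k hik h
  obtain ⟨⟨x₀, t₀⟩, hmin⟩ :=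
    (continuous_potential j z).exists_forall_le (tendsto_potential_cocompact hj hineq hinj)
  obtain ⟨a, b, c, d, hdet, hmob⟩ := exists_mobius_eq_affine x₀ t₀
  refine ⟨a, b, c, d, hdet, fun i => (hmob (z i)).1, ?_⟩
  simp only [fun i => (hmob (z i)).2]
  exact sum_smul_Nvec_eq_zero_of_forall_le (potential_rescale_zero_le hmin)

/-- Surjectivity part of the Guillemin–Sternberg isomorphism for 4-gons: for regular `j` and
pairwise distinct `zᵢ`, some `SL(2,ℂ)` element moves the configuration onto the constraint
surface `Σᵢ jᵢ N(zᵢ^g) = 0`. -/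
theorem stable_orbit_meets_constraint_surface
    (j : Fin 4 → ℝ) (hj : ∀ i, 0 < j i)
    (hreg : ∀ ε : Fin 4 → ℝ, (∀ i, ε i = 1 ∨ ε i = -1) → ∑ i, ε i * j i ≠ 0)
    (hineq : ∀ i, 2 * j i < ∑ k, j k)
    (z : Fin 4 → ℂ) (hz : ∀ i k, i ≠ k → z i ≠ z k) :
    ∃ a b c d : ℂ, a * d - b * c = 1 ∧ (∀ i, c * z i + d ≠ 0) ∧
      ∑ i, j i • Nvec ((a * z i + b) / (c * z i + d)) = 0 :=
  stable_orbit_meets_constraint_surface_general j hj hineq z hz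
end

section
/- Let j₁, j₂, j₃, j₄ be positive real numbers and z₁, z₂, z₃, z₄ ∈ ℂ with Σᵢ jᵢ N(zᵢ) = 0, and assume the vectors N(z₁),…,N(z₄) are not collinear. If g = [[a,b],[c,d]] with ad − bc = 1 satisfies c·zᵢ + d ≠ 0 for all i and Σᵢ jᵢ N((a·zᵢ + b)/(c·zᵢ + d)) = 0, then g is unitary (g*g = 1), i.e. g ∈ SU(2). (SL(2,ℂ) elements preserving the constraint surface along an orbit belong to SU(2): injectivity of the Guillemin–Sternberg isomorphism.) -/
open Matrix

/-!
Let `H = gᴴ g`, a positive Hermitian matrix with `det H = 1` and trace `S = ‖g‖²`. Its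
Rayleigh quotient `x(z) = |g (z, 1)|² / |(z, 1)|²` is affine in `N(z)`: `x = S/2 + m ⬝ N(z)`,
where `m` encodes the traceless part of `H`, and `|m|² = S²/4 - 1`. The Rayleigh quotient of
`g⁻¹` at `g • z` is `1 / x(z)`, so the two closure conditions give
`∑ jᵢ xᵢ = ∑ jᵢ / xᵢ = S/2 ∑ jᵢ`. But `S - (x + 1/x) = |m - (m ⬝ N) N|² / x ≥ 0`, so
every `N(zᵢ)` is parallel to `m`. Noncollinearity leaves only `m = 0`, i.e. `H = 1`.
-/

open Complex ComplexConjugate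

section UnitVectors

variable {ι : Type*} [Fintype ι]

theorem dotProduct_self_sub_dotProduct_smul (m N : ι → ℝ) (hN : N ⬝ᵥ N = 1) :
    (m - (m ⬝ᵥ N) • N) ⬝ᵥ (m - (m ⬝ᵥ N) • N) = m ⬝ᵥ m - (m ⬝ᵥ N) ^ 2 := by
  simp only [sub_dotProduct, dotProduct_sub, smul_dotProduct, dotProduct_smul, smul_eq_mul,
    dotProduct_comm N m, hN]
  ring

theorem eq_or_eq_neg_of_smul_eq_smul {v w : ι → ℝ} {s t : ℝ} (hv : v ⬝ᵥ v = 1)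
    (hw : w ⬝ᵥ w = 1) (h : s • v = t • w) (h0 : s • v ≠ 0) : v = w ∨ v = -w := by
  have hs : s ≠ 0 := by rintro rfl; simp at h0
  have hst : s ^ 2 = t ^ 2 := by
    simpa [smul_dotProduct, dotProduct_smul, hv, hw, sq] using congrArg (fun u => u ⬝ᵥ u) h
  rcases sq_eq_sq_iff_eq_or_eq_neg.mp hst with rfl | rfl
  · exact Or.inl (smul_right_injective _ hs h)
  · exact Or.inr (smul_right_injective _ hs (by simpa using h))

end UnitVectors

theorem nvec_dotProduct_self (z : ℂ) : Nvec z ⬝ᵥ Nvec z = 1 := by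
  have hn : 0 < 1 + normSq z := by linarith [normSq_nonneg z]
  simp only [dotProduct, Fin.sum_univ_three, Nvec, Complex.sq_norm, cons_val_zero, cons_val_one,
    cons_val_two, head_cons, tail_cons]
  field_simp
  rw [normSq_apply]
  ring

theorem nCollinear_of_forall_eq_smul {z : Fin 4 → ℂ} {m : Fin 3 → ℝ} (hm : m ≠ 0)
    {t : Fin 4 → ℝ} (h : ∀ i, m = t i • Nvec (z i)) : NCollinear z := by
  refine ⟨Nvec (z 0), by simpa [dotProduct, sq] using nvec_dotProduct_self (z 0), fun i => ?_⟩
  exact eq_or_eq_neg_of_smul_eq_smul (nvec_dotProduct_self _) (nvec_dotProduct_self _)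
    ((h i).symm.trans (h 0)) (h i ▸ hm)

/-- With `gᴴ g = !![p, q; conj q, s]` for `g = !![a, b; c, d]`, the vector
`(-Re q, Im q, (s - p) / 2)`. -/
noncomputable def tracelessGramVec (a b c d : ℂ) : Fin 3 → ℝ :=
  ![-(conj a * b + conj c * d).re, (conj a * b + conj c * d).im,
    (normSq b + normSq d - normSq a - normSq c) / 2]

/-- The Rayleigh quotient of `gᴴ g` at the vector `(z, 1)`. -/
noncomputable def rayleighQuot (a b c d z : ℂ) : ℝ :=
  (normSq (a * z + b) + normSq (c * z + d)) / (1 + normSq z)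

theorem rayleighQuot_eq (a b c d z : ℂ) :
    rayleighQuot a b c d z = (normSq a + normSq b + normSq c + normSq d) / 2
      + tracelessGramVec a b c d ⬝ᵥ Nvec z := by
  have hn : 0 < 1 + normSq z := by linarith [normSq_nonneg z]
  simp only [rayleighQuot, tracelessGramVec, dotProduct, Fin.sum_univ_three, Nvec,
    Complex.sq_norm, cons_val_zero, cons_val_one, cons_val_two, head_cons, tail_cons]
  field_simp
  simp only [normSq_apply, add_re, add_im, mul_re, mul_im, conj_re, conj_im]
  ring

theorem rayleighQuot_pos (a b : ℂ) {c d z : ℂ} (hz : c * z + d ≠ 0) :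
    0 < rayleighQuot a b c d z :=
  div_pos (add_pos_of_nonneg_of_pos (normSq_nonneg _) (normSq_pos.mpr hz))
    (by linarith [normSq_nonneg z])

theorem rayleighQuot_inv (a b c d z : ℂ) (hdet : a * d - b * c = 1) (hz : c * z + d ≠ 0) :
    rayleighQuot d (-b) (-c) a ((a * z + b) / (c * z + d)) = (rayleighQuot a b c d z)⁻¹ := by
  have h1 : d * ((a * z + b) / (c * z + d)) + -b = z / (c * z + d) := by
    rw [mul_div_assoc', div_add' _ _ _ hz]
    congr 1
    linear_combination z * hdet
  have h2 : -c * ((a * z + b) / (c * z + d)) + a = 1 / (c * z + d) := by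
    rw [mul_div_assoc', div_add' _ _ _ hz]
    congr 1
    linear_combination hdet
  have hv : 0 < normSq (c * z + d) := normSq_pos.mpr hz
  rw [rayleighQuot, rayleighQuot, h1, h2]
  simp only [map_div₀, map_one]
  field_simp
  ring

theorem tracelessGramVec_dotProduct_self (a b c d : ℂ) (hdet : a * d - b * c = 1) :
    tracelessGramVec a b c d ⬝ᵥ tracelessGramVec a b c d
      = ((normSq a + normSq b + normSq c + normSq d) / 2) ^ 2 - 1 := by
  have h := congrArg normSq hdet
  simp only [tracelessGramVec, dotProduct, Fin.sum_univ_three, cons_val_zero, cons_val_one,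
    cons_val_two, head_cons, tail_cons]
  simp only [normSq_apply, add_re, add_im, sub_re, sub_im, mul_re, mul_im, conj_re, conj_im,
    map_one] at h ⊢
  linear_combination -h

theorem conjTranspose_mul_self_fin_two (a b c d : ℂ) :
    !![a, b; c, d]ᴴ * !![a, b; c, d]
      = !![((normSq a + normSq c : ℝ) : ℂ), conj a * b + conj c * d;
          conj (conj a * b + conj c * d), ((normSq b + normSq d : ℝ) : ℂ)] := by
  ext i k
  fin_cases i <;> fin_cases k <;>
    simp [mul_apply, Fin.sum_univ_two, normSq_eq_conj_mul_self, mul_comm]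

theorem conjTranspose_mul_self_eq_one_of_tracelessGramVec_eq_zero {a b c d : ℂ}
    (hdet : a * d - b * c = 1) (h : tracelessGramVec a b c d = 0) :
    !![a, b; c, d]ᴴ * !![a, b; c, d] = 1 := by
  have hre := congrFun h 0
  have him := congrFun h 1
  simp only [tracelessGramVec, cons_val_zero, cons_val_one, Pi.zero_apply, neg_eq_zero]
    at hre him
  have hsp : normSq b + normSq d = normSq a + normSq c := by
    have := congrFun h 2
    simp only [tracelessGramVec, cons_val_two, tail_cons, head_cons, Pi.zero_apply] at this
    linarith
  have hT := tracelessGramVec_dotProduct_self a b c d hdet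
  rw [h, zero_dotProduct] at hT
  have hp : normSq a + normSq c = 1 := by
    nlinarith [normSq_nonneg a, normSq_nonneg b, normSq_nonneg c, normSq_nonneg d]
  rw [conjTranspose_mul_self_fin_two, show conj a * b + conj c * d = 0 from Complex.ext hre him,
    hsp, hp, one_fin_two]
  simp

theorem sum_mul_rayleighQuot {ι : Type*} [Fintype ι] (a b c d : ℂ) {j : ι → ℝ} {z : ι → ℂ}
    (h : ∑ i, j i • Nvec (z i) = 0) :
    ∑ i, j i * rayleighQuot a b c d (z i)
      = (normSq a + normSq b + normSq c + normSq d) / 2 * ∑ i, j i := by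
  have hdot : ∑ i, j i * (tracelessGramVec a b c d ⬝ᵥ Nvec (z i)) = 0 := by
    simp only [← smul_eq_mul, ← dotProduct_smul, ← dotProduct_sum, h, dotProduct_zero]
  simp only [rayleighQuot_eq, mul_add, Finset.sum_add_distrib, hdot]
  rw [← Finset.sum_mul, add_zero, mul_comm]

theorem trace_sub_rayleighQuot_add_inv {a b c d z : ℂ} (hdet : a * d - b * c = 1)
    (hz : c * z + d ≠ 0) :
    (normSq a + normSq b + normSq c + normSq d)
        - (rayleighQuot a b c d z + (rayleighQuot a b c d z)⁻¹)
      = (tracelessGramVec a b c d - (tracelessGramVec a b c d ⬝ᵥ Nvec z) • Nvec z) ⬝ᵥ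
          (tracelessGramVec a b c d - (tracelessGramVec a b c d ⬝ᵥ Nvec z) • Nvec z)
        / rayleighQuot a b c d z := by
  have hx := (rayleighQuot_pos a b hz).ne'
  rw [dotProduct_self_sub_dotProduct_smul _ _ (nvec_dotProduct_self z),
    tracelessGramVec_dotProduct_self a b c d hdet, eq_div_iff hx, sub_mul,
    add_mul (rayleighQuot a b c d z), inv_mul_cancel₀ hx]
  linear_combination (-(rayleighQuot a b c d z - (normSq a + normSq b + normSq c + normSq d) / 2
    + tracelessGramVec a b c d ⬝ᵥ Nvec z)) * rayleighQuot_eq a b c d z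

theorem sum_mul_trace_sub_rayleighQuot_add_inv {ι : Type*} [Fintype ι] {j : ι → ℝ}
    {z : ι → ℂ} {a b c d : ℂ} (hdet : a * d - b * c = 1) (hz : ∀ i, c * z i + d ≠ 0)
    (hclo : ∑ i, j i • Nvec (z i) = 0)
    (hclo' : ∑ i, j i • Nvec ((a * z i + b) / (c * z i + d)) = 0) :
    ∑ i, j i * ((normSq a + normSq b + normSq c + normSq d)
      - (rayleighQuot a b c d (z i) + (rayleighQuot a b c d (z i))⁻¹)) = 0 := by
  have hsum := sum_mul_rayleighQuot a b c d hclo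
  have hsum_inv := sum_mul_rayleighQuot d (-b) (-c) a hclo'
  simp only [rayleighQuot_inv a b c d _ hdet (hz _), normSq_neg] at hsum_inv
  simp only [mul_sub, mul_add, Finset.sum_sub_distrib, Finset.sum_add_distrib, ← Finset.sum_mul,
    hsum, hsum_inv]
  ring

/-- Injectivity part of the Guillemin–Sternberg isomorphism: an `SL(2,ℂ)` element mapping a
noncollinear closed configuration to a closed configuration along its orbit lies in `SU(2)`. -/
theorem sl2c_preserving_constraint_is_su2
    (j : Fin 4 → ℝ) (hj : ∀ i, 0 < j i) (z : Fin 4 → ℂ)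
    (hclo : ∑ i, j i • Nvec (z i) = 0)
    (hnc : ¬ NCollinear z)
    (a b c d : ℂ) (hdet : a * d - b * c = 1)
    (hnz : ∀ i, c * z i + d ≠ 0)
    (hclo2 : ∑ i, j i • Nvec ((a * z i + b) / (c * z i + d)) = 0) :
    (!![a, b; c, d])ᴴ * !![a, b; c, d] = 1 := by
  set m := tracelessGramVec a b c d
  have hdefect := sum_mul_trace_sub_rayleighQuot_add_inv hdet hnz hclo hclo2
  simp only [trace_sub_rayleighQuot_add_inv hdet (hnz _)] at hdefect
  have hterms := (Finset.sum_eq_zero_iff_of_nonneg fun i _ => mul_nonneg (hj i).le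
    (div_nonneg (Finset.sum_nonneg fun k _ => mul_self_nonneg _)
      (rayleighQuot_pos a b (hnz i)).le)).mp hdefect
  have hparallel : ∀ i, m = (m ⬝ᵥ Nvec (z i)) • Nvec (z i) := fun i =>
    have hsq := (div_eq_zero_iff.mp ((mul_eq_zero.mp (hterms i (Finset.mem_univ i))).resolve_left
      (hj i).ne')).resolve_right (rayleighQuot_pos a b (hnz i)).ne'
    sub_eq_zero.mp (dotProduct_self_eq_zero.mp hsq)
  by_cases hm : m = 0
  · exact conjTranspose_mul_self_eq_one_of_tracelessGramVec_eq_zero hdet hm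
  · exact absurd (nCollinear_of_forall_eq_smul hm hparallel) hnc
end

section
/- Let H = H¹σ₁ + H²σ₂ + H³σ₃ with H¹,H²,H³ ∈ ℝ (a traceless Hermitian 2×2 matrix), let z₁,…,z₄ ∈ ℂ and j₁,…,j₄ > 0, and define F(t) = Σᵢ jᵢ · log⟨v(zᵢ), exp(tH) v(zᵢ)⟩ (each inner product is a positive real since exp(tH) is positive definite). Then F′(0) = −Σᵢ jᵢ (H¹N₁(zᵢ) + H²N₂(zᵢ) + H³N₃(zᵢ)) and F″(0) = Σᵢ jᵢ ((H¹)²+(H²)²+(H³)² − (H¹N₁(zᵢ)+H²N₂(zᵢ)+H³N₃(zᵢ))²). (The first and second derivatives of the logarithm of the coherent-state norm along imaginary directions are minus the moment map H_X and minus the orbit metric G(X,X), point 1 of the paper's Proposition.) -/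
open Matrix

/-- The unit spinor `v(z) = (1+|z|²)^(−1/2) (z,1)ᵀ ∈ ℂ²`. -/
noncomputable def vspin (z : ℂ) : Fin 2 → ℂ :=
  ![z / (Real.sqrt (1 + ‖z‖ ^ 2) : ℝ), 1 / (Real.sqrt (1 + ‖z‖ ^ 2) : ℝ)]

/-- Hermitian inner product on ℂ², conjugate-linear in the first argument. -/
def inner2 (u w : Fin 2 → ℂ) : ℂ :=
  starRingEnd ℂ (u 0) * w 0 + starRingEnd ℂ (u 1) * w 1

/-- The Pauli matrices σ₁, σ₂, σ₃. -/
def pauli : Fin 3 → Matrix (Fin 2) (Fin 2) ℂ :=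
  ![!![0, 1; 1, 0], !![0, -Complex.I; Complex.I, 0], !![1, 0; 0, -1]]

/-!
For a unit spinor `v`, put `g(t) = ⟨v, exp(tH) v⟩`. Since `d/dt exp(tH) = exp(tH) H`, we have
`g(0) = 1`, `g'(0) = ⟨v, H v⟩` and `g''(0) = ⟨v, H² v⟩`, hence `(log g)'(0) = g'(0)` and
`(log g)''(0) = g''(0) - g'(0)²`. The Pauli relations give `H² = |H|² · 1`, and a direct
computation gives `⟨v(z), H v(z)⟩ = -H·N(z)`.
-/

open Filter Topology

section

variable {ι : Type*} [Fintype ι] (c : ι → ℝ) {g g' g'' : ι → ℝ → ℝ}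

theorem hasDerivAt_sum_mul_log {t : ℝ} (hg : ∀ i, HasDerivAt (g i) (g' i t) t)
    (hpos : ∀ i, 0 < g i t) :
    HasDerivAt (fun s => ∑ i, c i * Real.log (g i s)) (∑ i, c i * (g' i t / g i t)) t :=
  HasDerivAt.fun_sum fun i _ => ((hg i).log (hpos i).ne').const_mul (c i)

theorem hasDerivAt_deriv_sum_mul_log (hg : ∀ i t, HasDerivAt (g i) (g' i t) t)
    (hg' : ∀ i t, HasDerivAt (g' i) (g'' i t) t) {t : ℝ} (hpos : ∀ i, 0 < g i t) :
    HasDerivAt (deriv fun s => ∑ i, c i * Real.log (g i s))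
      (∑ i, c i * ((g'' i t * g i t - g' i t ^ 2) / g i t ^ 2)) t := by
  have hev : ∀ᶠ s in 𝓝 t, ∀ i, 0 < g i s :=
    eventually_all.2 fun i => (hg i t).continuousAt.eventually (lt_mem_nhds (hpos i))
  have hderiv : deriv (fun s => ∑ i, c i * Real.log (g i s)) =ᶠ[𝓝 t]
      fun s => ∑ i, c i * (g' i s / g i s) :=
    hev.mono fun s hs => (hasDerivAt_sum_mul_log c (fun i => hg i s) hs).deriv
  simpa only [sq] using (HasDerivAt.fun_sum fun i _ =>
    ((hg' i t).div (hg i t) (hpos i).ne').const_mul (c i)).congr_of_eventuallyEq hderiv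

end

section

variable {n : Type*} [Fintype n] [DecidableEq n]

theorem hasDerivAt_re_dotProduct_exp_smul_mulVec (A : Matrix n n ℂ) (u w : n → ℂ) (t : ℝ) :
    HasDerivAt (fun s : ℝ => (star u ⬝ᵥ NormedSpace.exp (s • A) *ᵥ w).re)
      (star u ⬝ᵥ NormedSpace.exp (t • A) *ᵥ (A *ᵥ w)).re t := by
  -- `exp` only depends on the topology, so any submultiplicative norm can be used to differentiate.
  let _ : NormedRing (Matrix n n ℂ) := Matrix.linftyOpNormedRing
  let _ : NormedAlgebra ℝ (Matrix n n ℂ) := Matrix.linftyOpNormedAlgebra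
  let ℓ : Matrix n n ℂ →ₗ[ℝ] ℝ :=
    { toFun := fun M => (star u ⬝ᵥ M *ᵥ w).re
      map_add' := fun M N => by simp [add_mulVec, dotProduct_add]
      map_smul' := fun c M => by simp [smul_mulVec, dotProduct_smul] }
  rw [mulVec_mulVec]
  exact (LinearMap.toContinuousLinearMap ℓ).hasFDerivAt.comp_hasDerivAt t
    (hasDerivAt_exp_smul_const A t)

end

theorem inner2_eq_star_dotProduct (u w : Fin 2 → ℂ) : inner2 u w = star u ⬝ᵥ w := by
  simp [inner2, dotProduct, Fin.sum_univ_two]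

theorem vspin_eq_smul (z : ℂ) : vspin z = (Real.sqrt (1 + ‖z‖ ^ 2))⁻¹ • ![z, 1] := by
  ext i
  fin_cases i <;> simp [vspin, div_eq_inv_mul]

theorem star_vspin_dotProduct_mulVec (z : ℂ) (M : Matrix (Fin 2) (Fin 2) ℂ) :
    star (vspin z) ⬝ᵥ M *ᵥ vspin z = (1 + ‖z‖ ^ 2)⁻¹ • (star ![z, 1] ⬝ᵥ M *ᵥ ![z, 1]) := by
  rw [vspin_eq_smul, star_smul, star_trivial, mulVec_smul, smul_dotProduct, dotProduct_smul,
    smul_smul, ← mul_inv, ← sq, Real.sq_sqrt (by positivity)]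

theorem star_vspin_dotProduct_vspin (z : ℂ) : star (vspin z) ⬝ᵥ vspin z = 1 := by
  have hz : star ![z, 1] ⬝ᵥ ![z, 1] = ((1 + ‖z‖ ^ 2 : ℝ) : ℂ) := by
    rw [vec2_dotProduct]
    simp [Complex.conj_mul', add_comm]
  have h := star_vspin_dotProduct_mulVec z 1
  rwa [one_mulVec, one_mulVec, hz, Complex.real_smul, ← Complex.ofReal_mul,
    inv_mul_cancel₀ (by positivity), Complex.ofReal_one] at h

open Complex in
theorem pauli_combination_eq (a b c : ℂ) :
    a • pauli 0 + b • pauli 1 + c • pauli 2 = !![c, a - b * I; a + b * I, -c] := by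
  ext i k
  fin_cases i <;> fin_cases k <;> simp [pauli, sub_eq_add_neg]

open Complex in
theorem pauli_combination_mul_self (a b c : ℂ) :
    (a • pauli 0 + b • pauli 1 + c • pauli 2) * (a • pauli 0 + b • pauli 1 + c • pauli 2)
      = (a ^ 2 + b ^ 2 + c ^ 2) • 1 := by
  rw [pauli_combination_eq, mul_fin_two]
  ext i k
  fin_cases i <;> fin_cases k <;> simp <;> grind [I_sq]

theorem star_vspin_dotProduct_pauli_mulVec (a b c : ℝ) (z : ℂ) :
    star (vspin z) ⬝ᵥ ((a : ℂ) • pauli 0 + (b : ℂ) • pauli 1 + (c : ℂ) • pauli 2) *ᵥ vspin z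
      = (-(a * Nvec z 0 + b * Nvec z 1 + c * Nvec z 2) : ℝ) := by
  have hz : star ![z, 1] ⬝ᵥ
      ((a : ℂ) • pauli 0 + (b : ℂ) • pauli 1 + (c : ℂ) • pauli 2) *ᵥ ![z, 1]
        = (2 * a * z.re - 2 * b * z.im - c * (1 - ‖z‖ ^ 2) : ℝ) := by
    rw [pauli_combination_eq, mulVec_fin_two, vec2_dotProduct]
    simp [Complex.ext_iff, Complex.sq_norm, Complex.normSq_apply]
    constructor <;> ring
  rw [star_vspin_dotProduct_mulVec, hz, Complex.real_smul, ← Complex.ofReal_mul]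
  congr 1
  simp only [Nvec, cons_val_zero, cons_val_one, cons_val_two, head_cons, tail_cons]
  field_simp
  ring

theorem deriv_log_coherent_norm_general
    (H₁ H₂ H₃ : ℝ) (z : Fin 4 → ℂ) (j : Fin 4 → ℝ)
    (H : Matrix (Fin 2) (Fin 2) ℂ)
    (hH : H = (H₁ : ℂ) • pauli 0 + (H₂ : ℂ) • pauli 1 + (H₃ : ℂ) • pauli 2)
    (F : ℝ → ℝ)
    (hF : ∀ t : ℝ, F t = ∑ i, j i *
      Real.log ((inner2 (vspin (z i)) ((NormedSpace.exp (t • H)).mulVec (vspin (z i)))).re)) :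
    deriv F 0 =
      -∑ i, j i * (H₁ * Nvec (z i) 0 + H₂ * Nvec (z i) 1 + H₃ * Nvec (z i) 2) ∧
    deriv (deriv F) 0 =
      ∑ i, j i * ((H₁ ^ 2 + H₂ ^ 2 + H₃ ^ 2)
        - (H₁ * Nvec (z i) 0 + H₂ * Nvec (z i) 1 + H₃ * Nvec (z i) 2) ^ 2) := by
  simp only [inner2_eq_star_dotProduct] at hF
  obtain rfl := funext hF
  have hexp (w : Fin 2 → ℂ) : NormedSpace.exp ((0 : ℝ) • H) *ᵥ w = w := by
    rw [zero_smul, NormedSpace.exp_zero, one_mulVec]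
  have hHH : H * H = ((H₁ ^ 2 + H₂ ^ 2 + H₃ ^ 2 : ℝ) : ℂ) • 1 := by
    rw [hH, pauli_combination_mul_self]
    push_cast
    rfl
  have hHv (i : Fin 4) : star (vspin (z i)) ⬝ᵥ H *ᵥ vspin (z i)
      = (-(H₁ * Nvec (z i) 0 + H₂ * Nvec (z i) 1 + H₃ * Nvec (z i) 2) : ℝ) :=
    hH ▸ star_vspin_dotProduct_pauli_mulVec H₁ H₂ H₃ (z i)
  have hpos (i : Fin 4) :
      0 < (star (vspin (z i)) ⬝ᵥ NormedSpace.exp ((0 : ℝ) • H) *ᵥ vspin (z i)).re := by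
    simp only [hexp, star_vspin_dotProduct_vspin, Complex.one_re, zero_lt_one]
  have hg := hasDerivAt_re_dotProduct_exp_smul_mulVec H
  constructor
  · rw [(hasDerivAt_sum_mul_log j
      (g' := fun i t =>
        (star (vspin (z i)) ⬝ᵥ NormedSpace.exp (t • H) *ᵥ H *ᵥ vspin (z i)).re)
      (fun i => hg _ _ 0) hpos).deriv]
    simp only [hexp, hHv, star_vspin_dotProduct_vspin, Complex.ofReal_re, Complex.one_re, div_one,
      mul_neg, Finset.sum_neg_distrib]
  · rw [(hasDerivAt_deriv_sum_mul_log j (fun i => hg _ _) (fun i => hg _ _) hpos).deriv]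
    simp only [hexp, hHv, mulVec_mulVec, hHH, smul_mulVec, one_mulVec, dotProduct_smul,
      star_vspin_dotProduct_vspin, smul_eq_mul, mul_one, Complex.ofReal_re, Complex.one_re,
      one_pow, div_one, neg_sq]

/-- First and second derivatives of `F(t) = Σᵢ jᵢ log⟨v(zᵢ), exp(tH) v(zᵢ)⟩` at `t = 0`, for a
traceless Hermitian `H = H¹σ₁ + H²σ₂ + H³σ₃`: they equal minus the moment map and minus the
orbit metric. -/
theorem deriv_log_coherent_norm
    (H₁ H₂ H₃ : ℝ) (z : Fin 4 → ℂ) (j : Fin 4 → ℝ) (hj : ∀ i, 0 < j i)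
    (H : Matrix (Fin 2) (Fin 2) ℂ)
    (hH : H = (H₁ : ℂ) • pauli 0 + (H₂ : ℂ) • pauli 1 + (H₃ : ℂ) • pauli 2)
    (F : ℝ → ℝ)
    (hF : ∀ t : ℝ, F t = ∑ i, j i *
      Real.log ((inner2 (vspin (z i)) ((NormedSpace.exp (t • H)).mulVec (vspin (z i)))).re)) :
    deriv F 0 =
      -∑ i, j i * (H₁ * Nvec (z i) 0 + H₂ * Nvec (z i) 1 + H₃ * Nvec (z i) 2) ∧
    deriv (deriv F) 0 =
      ∑ i, j i * ((H₁ ^ 2 + H₂ ^ 2 + H₃ ^ 2)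
        - (H₁ * Nvec (z i) 0 + H₂ * Nvec (z i) 1 + H₃ * Nvec (z i) 2) ^ 2) :=
  deriv_log_coherent_norm_general H₁ H₂ H₃ z j H hH F hF
end

section
/- Let j₁, j₂, j₃, j₄ be positive real numbers with Σᵢ εᵢ jᵢ ≠ 0 for every choice of signs εᵢ ∈ {+1,−1} (regularity), and let N₁, N₂, N₃, N₄ ∈ ℝ³ be unit vectors with j₁N₁ + j₂N₂ + j₃N₃ + j₄N₄ = 0. If R ∈ SO(3) satisfies R·Nᵢ = Nᵢ for all i ∈ {1,2,3,4}, then R is the identity. (For regular j⃗ the rotation group acts freely on the constraint surface H⁻¹(0).) -/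
/-! If two of the `Nᵢ` are not parallel, `R` fixes them and, being a rotation, also their cross
product; these three vectors form a basis, so `R = 1`. Otherwise every `Nᵢ = ±N₁`, and the closure
condition becomes `(∑ ±jᵢ) N₁ = 0`, contradicting regularity. -/

open Matrix

theorem Matrix.of_mulVec_eq_mul_transpose {α m n : Type*} [CommSemiring α] [Fintype n]
    (A : Matrix n n α) (B : Matrix m n α) :
    of (fun i => A *ᵥ B i) = B * Aᵀ := by
  ext i k
  simp [mul_apply, mulVec, dotProduct, mul_comm]

theorem Matrix.eq_one_of_mulVec_eq_self {K n : Type*} [Field K] [Fintype n] [DecidableEq n]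
    (A B : Matrix n n K) (hB : B.det ≠ 0) (hfix : ∀ i, A *ᵥ B i = B i) : A = 1 := by
  have hunit : IsUnit B := (isUnit_iff_isUnit_det _).mpr hB.isUnit
  have hmul : B * Aᵀ = B := by
    rw [← of_mulVec_eq_mul_transpose]
    exact congrArg of (funext hfix)
  rw [← transpose_eq_one, ← hunit.mul_eq_left, hmul]

theorem Matrix.mulVec_dotProduct_mulVec_of_transpose_mul_self {α n : Type*} [CommSemiring α]
    [Fintype n] [DecidableEq n] {R : Matrix n n α} (hR : Rᵀ * R = 1) (x y : n → α) :
    R *ᵥ x ⬝ᵥ R *ᵥ y = x ⬝ᵥ y := by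
  rw [dotProduct_mulVec, ← mulVec_transpose, mulVec_mulVec, hR, one_mulVec]

theorem mulVec_cross_eq_self_of_mulVec_eq_self {R : Matrix (Fin 3) (Fin 3) ℝ} (hR : Rᵀ * R = 1)
    (hdet : R.det = 1) {u v : Fin 3 → ℝ} (hu : R *ᵥ u = u) (hv : R *ᵥ v = v) :
    R *ᵥ (u ⨯₃ v) = u ⨯₃ v := by
  set w := u ⨯₃ v
  have hnorm : R *ᵥ w ⬝ᵥ R *ᵥ w = w ⬝ᵥ w := mulVec_dotProduct_mulVec_of_transpose_mul_self hR w w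
  -- both sides are triple products, `det ![R w, u, v] = det R * det ![w, u, v]`
  have hdot : R *ᵥ w ⬝ᵥ w = w ⬝ᵥ w := by
    have hrows : of ![R *ᵥ w, R *ᵥ u, R *ᵥ v] = of ![w, u, v] * Rᵀ := by
      rw [← of_mulVec_eq_mul_transpose]
      congr 1
      ext i : 1
      fin_cases i <;> rfl
    have := congrArg det hrows
    rw [det_mul, det_transpose, hdet, mul_one, hu, hv] at this
    rw [triple_product_eq_det, triple_product_eq_det]
    exact this
  have hsq : (R *ᵥ w - w) ⬝ᵥ (R *ᵥ w - w) = 0 := by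
    rw [sub_dotProduct, dotProduct_sub, dotProduct_sub, hnorm, hdot, dotProduct_comm w (R *ᵥ w),
      hdot]
    ring
  exact sub_eq_zero.mp (dotProduct_self_eq_zero.mp hsq)

theorem eq_one_of_mulVec_eq_self_of_cross_ne_zero {R : Matrix (Fin 3) (Fin 3) ℝ}
    (hR : Rᵀ * R = 1) (hdet : R.det = 1) {u v : Fin 3 → ℝ} (hu : R *ᵥ u = u) (hv : R *ᵥ v = v)
    (huv : u ⨯₃ v ≠ 0) : R = 1 := by
  refine eq_one_of_mulVec_eq_self R ![u ⨯₃ v, u, v] ?_ ?_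
  · rw [← triple_product_eq_det]
    exact mt dotProduct_self_eq_zero.mp huv
  · intro i
    fin_cases i
    exacts [mulVec_cross_eq_self_of_mulVec_eq_self hR hdet hu hv, hu, hv]

theorem eq_dotProduct_smul_of_cross_eq_zero {K : Type*} [CommRing K] {u v : Fin 3 → K}
    (hu : u ⬝ᵥ u = 1) (huv : u ⨯₃ v = 0) : v = (u ⬝ᵥ v) • u := by
  have := cross_cross_eq_smul_sub_smul' u u v
  rw [huv, map_zero, hu, one_smul] at this
  exact (sub_eq_zero.mp this.symm).symm

theorem dotProduct_eq_one_or_eq_neg_one_of_cross_eq_zero {K : Type*} [CommRing K]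
    [NoZeroDivisors K] {u v : Fin 3 → K} (hu : u ⬝ᵥ u = 1) (hv : v ⬝ᵥ v = 1)
    (huv : u ⨯₃ v = 0) : u ⬝ᵥ v = 1 ∨ u ⬝ᵥ v = -1 := by
  rw [← mul_self_eq_one_iff]
  have hpar := eq_dotProduct_smul_of_cross_eq_zero hu huv
  rw [hpar, smul_dotProduct, dotProduct_smul, hu, smul_eq_mul, smul_eq_mul, mul_one] at hv
  exact hv

theorem so3_acts_freely_on_constraint_surface_general
    (j : Fin 4 → ℝ)
    (hreg : ∀ ε : Fin 4 → ℝ, (∀ i, ε i = 1 ∨ ε i = -1) → ∑ i, ε i * j i ≠ 0)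
    (N : Fin 4 → Fin 3 → ℝ) (hN : ∀ i, ∑ x, N i x ^ 2 = 1)
    (hclo : ∑ i, j i • N i = 0)
    (R : Matrix (Fin 3) (Fin 3) ℝ) (hR : Rᵀ * R = 1) (hdet : R.det = 1)
    (hfix : ∀ i, R.mulVec (N i) = N i) :
    R = 1 := by
  have hunit : ∀ i, N i ⬝ᵥ N i = 1 := fun i => by simpa [dotProduct, sq] using hN i
  by_contra hne
  have hpar : ∀ i, N 0 ⨯₃ N i = 0 := fun i => by
    by_contra h
    exact hne (eq_one_of_mulVec_eq_self_of_cross_ne_zero hR hdet (hfix 0) (hfix i) h)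
  set ε : Fin 4 → ℝ := fun i => N 0 ⬝ᵥ N i
  have hsum : (∑ i, ε i * j i) • N 0 = 0 := by
    rw [← hclo, Finset.sum_smul]
    refine Finset.sum_congr rfl fun i _ => ?_
    rw [eq_dotProduct_smul_of_cross_eq_zero (hunit 0) (hpar i), smul_smul, mul_comm]
  have hN0 : N 0 ≠ 0 := fun h => by simpa [h] using hunit 0
  exact hreg ε (fun i => dotProduct_eq_one_or_eq_neg_one_of_cross_eq_zero (hunit 0) (hunit i)
    (hpar i)) ((smul_eq_zero.mp hsum).resolve_right hN0)

/-- For regular `j⃗` the rotation group acts freely on the constraint surface: any `R ∈ SO(3)`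
fixing all four unit vectors of a closed configuration is the identity. -/
theorem so3_acts_freely_on_constraint_surface
    (j : Fin 4 → ℝ) (hj : ∀ i, 0 < j i)
    (hreg : ∀ ε : Fin 4 → ℝ, (∀ i, ε i = 1 ∨ ε i = -1) → ∑ i, ε i * j i ≠ 0)
    (N : Fin 4 → Fin 3 → ℝ) (hN : ∀ i, ∑ x, N i x ^ 2 = 1)
    (hclo : ∑ i, j i • N i = 0)
    (R : Matrix (Fin 3) (Fin 3) ℝ) (hR : Rᵀ * R = 1) (hdet : R.det = 1)
    (hfix : ∀ i, R.mulVec (N i) = N i) :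
    R = 1 :=
  so3_acts_freely_on_constraint_surface_general j hreg N hN hclo R hR hdet hfix
end

section
/- Let X₁, X₂, X₃, X₄ ∈ ℝ³ with X₁+X₂+X₃+X₄ = 0 and V(X) := det(X₁,X₂,X₃) ≠ 0, and let ℓ¹, ℓ², ℓ³, ℓ⁴ be the dual tetrad vectors defined by ℓ¹ = (X₂×X₃ + X₃×X₄ + X₄×X₂)/(4V(X)) and its cyclic analogues. Set V(ℓ) := det(ℓ¹,ℓ²,ℓ³). Then V(X)·V(ℓ) = 1/4, and the dual relation X₁ = (ℓ²×ℓ³ + ℓ³×ℓ⁴ + ℓ⁴×ℓ²)/(4V(ℓ)) holds (and similarly for X₂, X₃, X₄ with the corresponding cyclic sums of cross products of the other three ℓ's). -/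
open Matrix

/-- Determinant of the 3×3 matrix with columns `a`, `b`, `c`. -/
noncomputable def det3 (a b c : Fin 3 → ℝ) : ℝ := (Matrix.of ![a, b, c])ᵀ.det

/-- The dual tetrad `ℓⁱ = (1/4V) εⁱʲᵏˡ u_j [X_k, X_l]` (with `u = (1/2)(1,1,1,1)`),
written out via cross products (0-indexed: `ℓ¹ = dualTetrad X 0`, etc.). -/
noncomputable def dualTetrad (X : Fin 4 → Fin 3 → ℝ) : Fin 4 → Fin 3 → ℝ :=
  (4 * det3 (X 0) (X 1) (X 2))⁻¹ •
    ![(X 1) ⨯₃ (X 2) + (X 2) ⨯₃ (X 3) + (X 3) ⨯₃ (X 1),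
      (X 2) ⨯₃ (X 0) + (X 0) ⨯₃ (X 3) + (X 3) ⨯₃ (X 2),
      (X 0) ⨯₃ (X 1) + (X 1) ⨯₃ (X 3) + (X 3) ⨯₃ (X 0),
      (X 1) ⨯₃ (X 0) + (X 0) ⨯₃ (X 2) + (X 2) ⨯₃ (X 1)]

/-! With `X₁ + X₂ + X₃ + X₄ = 0`, a direct computation gives the biorthogonality relations
`ℓⁱ ⬝ X_j = δⁱⱼ - 1/4`. For `i, j ≤ 3` they say that the matrix with rows `ℓ¹, ℓ², ℓ³` times
the matrix with columns `X₁, X₂, X₃` is `I - J/4` (`J` the all-ones matrix), whose determinant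
is `1/4`: this is `V(X) V(ℓ) = 1/4`. The `ℓ`'s sum to zero as well, so the same relations hold
between `ℓ` and its own dual tetrad; as they are symmetric in the two tetrads, the dual of `ℓ`
and `X` have the same inner products with the basis `ℓ¹, ℓ², ℓ³`, hence coincide. -/

theorem sum_dualTetrad_eq_zero (X : Fin 4 → Fin 3 → ℝ) : ∑ i, dualTetrad X i = 0 := by
  simp only [dualTetrad, Pi.smul_apply, ← Finset.smul_sum, Fin.sum_univ_four, cons_val_zero,
    cons_val_one, cons_val_two, cons_val_three, head_cons, tail_cons, ← cross_anticomm (X 0) (X 1),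
    ← cross_anticomm (X 0) (X 2), ← cross_anticomm (X 0) (X 3), ← cross_anticomm (X 1) (X 2),
    ← cross_anticomm (X 1) (X 3), ← cross_anticomm (X 2) (X 3)]
  apply smul_eq_zero_of_right
  abel

theorem det3_mul_det3 (a b c x y z : Fin 3 → ℝ) :
    det3 a b c * det3 x y z = (Matrix.of fun i j => ![a, b, c] i ⬝ᵥ ![x, y, z] j).det := by
  have hprod : (Matrix.of fun i j => ![a, b, c] i ⬝ᵥ ![x, y, z] j) =
      Matrix.of ![a, b, c] * (Matrix.of ![x, y, z])ᵀ := by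
    ext i j
    rw [Matrix.mul_apply']
    rfl
  rw [hprod, det_mul, det_transpose, det3, det3, det_transpose, det_transpose]

theorem eq_of_dotProduct_eq_of_det3_ne_zero {a b c u v : Fin 3 → ℝ} (h : det3 a b c ≠ 0)
    (ha : a ⬝ᵥ u = a ⬝ᵥ v) (hb : b ⬝ᵥ u = b ⬝ᵥ v) (hc : c ⬝ᵥ u = c ⬝ᵥ v) : u = v := by
  rw [det3, det_transpose] at h
  refine sub_eq_zero.mp (eq_zero_of_mulVec_eq_zero h ?_)
  funext i
  fin_cases i <;> simp [mulVec, dotProduct_sub, ha, hb, hc]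

theorem dualTetrad_dotProduct (X : Fin 4 → Fin 3 → ℝ) (hclo : ∑ i, X i = 0)
    (hV : det3 (X 0) (X 1) (X 2) ≠ 0) (i j : Fin 4) :
    dualTetrad X i ⬝ᵥ X j = (if i = j then 1 else 0) - 1 / 4 := by
  have h3 (k : Fin 3) : X 3 k = -(X 0 k + X 1 k + X 2 k) := by
    rw [Fin.sum_univ_four] at hclo
    rw [← neg_eq_of_add_eq_zero_right hclo]
    simp
  have h4V : 4 * det3 (X 0) (X 1) (X 2) ≠ 0 := mul_ne_zero four_ne_zero hV
  have hnum : (4 * det3 (X 0) (X 1) (X 2)) * (dualTetrad X i ⬝ᵥ X j) =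
      det3 (X 0) (X 1) (X 2) * (4 * (if i = j then 1 else 0) - 1) := by
    rw [dualTetrad, Pi.smul_apply, smul_dotProduct, smul_eq_mul, mul_inv_cancel_left₀ h4V]
    fin_cases i <;> fin_cases j <;>
      simp only [Fin.zero_eta, Fin.mk_one, Fin.reduceFinMk, Fin.isValue, Fin.reduceEq, ↓reduceIte,
        cons_val_zero, cons_val_one, cons_val_two, cons_val_three, head_cons, tail_cons,
        dotProduct, Fin.sum_univ_three, Pi.add_apply, cross_apply, h3, det3, det_transpose,
        det_fin_three, of_apply] <;>
      ring
  rw [← mul_right_inj' h4V, hnum]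
  ring

/-- `V(X)·V(ℓ) = 1/4`, and the duality relation: applying the dual-tetrad construction to the
`ℓ`'s recovers the `X`'s, e.g. `X₁ = (ℓ²×ℓ³ + ℓ³×ℓ⁴ + ℓ⁴×ℓ²)/(4V(ℓ))`. -/
theorem dualTetrad_involutive
    (X : Fin 4 → Fin 3 → ℝ) (hclo : ∑ i, X i = 0)
    (hV : det3 (X 0) (X 1) (X 2) ≠ 0) :
    det3 (X 0) (X 1) (X 2) *
      det3 (dualTetrad X 0) (dualTetrad X 1) (dualTetrad X 2) = 1 / 4 ∧
    dualTetrad (dualTetrad X) = X := by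
  have hpair := dualTetrad_dotProduct X hclo hV
  set ℓ := dualTetrad X
  have hdet : det3 (X 0) (X 1) (X 2) * det3 (ℓ 0) (ℓ 1) (ℓ 2) = 1 / 4 := by
    rw [mul_comm, det3_mul_det3, det_fin_three]
    simp only [of_apply, cons_val_zero, cons_val_one, cons_val_two, head_cons, tail_cons, hpair,
      Fin.reduceEq, ↓reduceIte]
    norm_num
  refine ⟨hdet, ?_⟩
  have hVℓ : det3 (ℓ 0) (ℓ 1) (ℓ 2) ≠ 0 :=
    right_ne_zero_of_mul (hdet ▸ one_div_ne_zero four_ne_zero)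
  have hpairℓ := dualTetrad_dotProduct ℓ (sum_dualTetrad_eq_zero X) hVℓ
  funext j
  have hdual (i : Fin 4) : ℓ i ⬝ᵥ dualTetrad ℓ j = ℓ i ⬝ᵥ X j := by
    rw [dotProduct_comm, hpairℓ, hpair]
    simp only [@eq_comm _ j]
  exact eq_of_dotProduct_eq_of_det3_ne_zero hVℓ (hdual 0) (hdual 1) (hdual 2)
end

section
/- Let X₁, X₂, X₃, X₄ ∈ ℝ³ with X₁+X₂+X₃+X₄ = 0 and V(X) := det(X₁,X₂,X₃) ≠ 0, let ℓ¹,…,ℓ⁴ be the dual tetrad vectors, let ε := sign(V(X)), and define the edge vectors Lⁱʲ := √|V(X)| · (ℓⁱ − ℓʲ). Then V(L) := det(L¹⁴, L²⁴, L³⁴) = ε·√|V(X)| and X₁ = ε·(L²⁴ × L³⁴). (The area normal vectors of the tetrahedron are recovered as cross products of its edge vectors.) -/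
open Matrix

/-- Edge vectors of the tetrahedron: `Lⁱʲ = √|V(X)| (ℓⁱ − ℓʲ)`. -/
noncomputable def edgeVec (X : Fin 4 → Fin 3 → ℝ) (i k : Fin 4) : Fin 3 → ℝ :=
  Real.sqrt |det3 (X 0) (X 1) (X 2)| • (dualTetrad X i - dualTetrad X k)

/-! Under the closure `X₄ = -(X₁ + X₂ + X₃)` the dual tetrad collapses to
`ℓ¹ - ℓ⁴ = V⁻¹ X₂ × X₃` and its cyclic shifts, so the edge vectors `L¹⁴, L²⁴, L³⁴` are
`√|V| / V` times `X₂ × X₃, X₃ × X₁, X₁ × X₂`. The classical identities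
`(X₃ × X₁) × (X₁ × X₂) = V X₁` and `det(X₂ × X₃, X₃ × X₁, X₁ × X₂) = V²` then give both claims,
because `(√|V| / V)² V = sign V`. -/

lemma det3_eq_dotProduct_cross (a b c : Fin 3 → ℝ) : det3 a b c = a ⬝ᵥ b ⨯₃ c := by
  rw [det3, det_transpose, triple_product_eq_det]
  rfl

lemma det3_smul (r : ℝ) (a b c : Fin 3 → ℝ) :
    det3 (r • a) (r • b) (r • c) = r ^ 3 * det3 a b c := by
  simp only [det3_eq_dotProduct_cross, LinearMap.map_smul, LinearMap.smul_apply,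
    dotProduct_smul, smul_dotProduct, smul_eq_mul]
  ring

lemma cross_cross_cross (a b c : Fin 3 → ℝ) : (c ⨯₃ a) ⨯₃ (a ⨯₃ b) = det3 a b c • a := by
  rw [cross_cross_eq_smul_sub_smul', dotProduct_comm, dot_cross_self, zero_smul, sub_zero,
    det3_eq_dotProduct_cross, ← triple_product_permutation, triple_product_permutation]

lemma det3_cross (a b c : Fin 3 → ℝ) :
    det3 (b ⨯₃ c) (c ⨯₃ a) (a ⨯₃ b) = det3 a b c ^ 2 := by
  rw [det3_eq_dotProduct_cross (b ⨯₃ c), cross_cross_cross, dotProduct_smul, smul_eq_mul,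
    dotProduct_comm, ← det3_eq_dotProduct_cross, sq]

lemma edgeVec_three_eq_smul_cross {X : Fin 4 → Fin 3 → ℝ} (hclo : ∑ i, X i = 0) :
    let r := √|det3 (X 0) (X 1) (X 2)| / det3 (X 0) (X 1) (X 2)
    edgeVec X 0 3 = r • X 1 ⨯₃ X 2 ∧ edgeVec X 1 3 = r • X 2 ⨯₃ X 0 ∧
      edgeVec X 2 3 = r • X 0 ⨯₃ X 1 := by
  have hX3 : X 3 = -(X 0 + X 1 + X 2) := by
    rw [Fin.sum_univ_four] at hclo
    exact eq_neg_of_add_eq_zero_right hclo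
  simp only [edgeVec, dualTetrad, Pi.smul_apply, Matrix.cons_val, hX3, map_neg, map_add,
    LinearMap.neg_apply, LinearMap.add_apply, cross_self, ← cross_anticomm (X 0) (X 1),
    ← cross_anticomm (X 1) (X 2), ← cross_anticomm (X 2) (X 0)]
  refine ⟨?_, ?_, ?_⟩ <;> module

lemma sqrt_abs_div_sq_mul_self {r : ℝ} (hr : r ≠ 0) : (√|r| / r) ^ 2 * r = Real.sign r := by
  rw [div_pow, Real.sq_sqrt (abs_nonneg r), sq, div_mul_eq_div_div, div_mul_cancel₀ _ hr]
  rcases hr.lt_or_gt with hneg | hpos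
  · rw [abs_of_neg hneg, Real.sign_of_neg hneg, neg_div, div_self hr]
  · rw [abs_of_pos hpos, Real.sign_of_pos hpos, div_self hr]

lemma sign_mul_sign_of_ne_zero {r : ℝ} (hr : r ≠ 0) : Real.sign r * Real.sign r = 1 := by
  rcases Real.sign_apply_eq_of_ne_zero r hr with h | h <;> rw [h] <;> norm_num

/-- The edge vectors satisfy `V(L) = det(L¹⁴,L²⁴,L³⁴) = ε √|V(X)|` with `ε = sign V(X)`, and
the area normals are recovered as cross products of edge vectors: `X₁ = ε L²⁴ × L³⁴`. -/
theorem areaNormal_from_edgeVectors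
    (X : Fin 4 → Fin 3 → ℝ) (hclo : ∑ i, X i = 0)
    (hV : det3 (X 0) (X 1) (X 2) ≠ 0) :
    det3 (edgeVec X 0 3) (edgeVec X 1 3) (edgeVec X 2 3) =
      Real.sign (det3 (X 0) (X 1) (X 2)) * Real.sqrt |det3 (X 0) (X 1) (X 2)| ∧
    X 0 = Real.sign (det3 (X 0) (X 1) (X 2)) • ((edgeVec X 1 3) ⨯₃ (edgeVec X 2 3)) := by
  obtain ⟨h0, h1, h2⟩ := edgeVec_three_eq_smul_cross hclo
  have hscalar := sqrt_abs_div_sq_mul_self hV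
  constructor
  · rw [h0, h1, h2, det3_smul, det3_cross, ← hscalar]
    field_simp
  · simp only [h1, h2, map_smul, LinearMap.smul_apply, cross_cross_cross, smul_smul]
    rw [← mul_assoc (√|_| / _), ← sq, hscalar, sign_mul_sign_of_ne_zero hV, one_smul]
end

section
/- Let z₁, z₂, z₃, z₄ ∈ ℂ be pairwise distinct and let j₁,…,j₄ > 0 satisfy the closure constraint Σᵢ jᵢ N(zᵢ) = 0. Then det(N(z₁), N(z₂), N(z₃)) = 0 if and only if the cross-ratio Z(z₁,z₂,z₃,z₄) is real. (A closed configuration corresponds to a degenerate, zero-volume tetrahedron exactly when its cross-ratio is real; nondegenerate tetrahedra are parametrized by ℂ∖ℝ.) -/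
open Matrix

/-!
Planes `{x | x ⬝ᵥ v = t}` of `ℝ³` correspond under `N` to generalized circles of `ℂ`, i.e. to
the kernel vectors of the matrix with rows `(|zᵢ|², Re zᵢ, Im zᵢ, 1)`, whose determinant is
`Im (p q̄)` for the cross-ratio `p / q`. So the cross-ratio is real iff the `N(zᵢ)` lie on a
common plane. Pairing the closure relation with `v` gives `(∑ jᵢ) t = 0`, so with positive
weights that plane passes through `0`; and since `j₄ ≠ 0`, a plane through `0` containing
`N(z₁), N(z₂), N(z₃)` also contains `N(z₄)`. Thus both conditions say that the `N(zᵢ)` lie on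
a common plane through `0`.
-/

open ComplexConjugate

section Closure

variable {ι n 𝕜 : Type*} [Fintype ι] [Fintype n] [Field 𝕜] {x : ι → n → 𝕜} {j : ι → 𝕜}
  {v : n → 𝕜}

theorem sum_smul_dotProduct_eq_zero (hclo : ∑ i, j i • x i = 0) :
    ∑ i, j i * (x i ⬝ᵥ v) = 0 := by
  simpa [sum_dotProduct, smul_dotProduct] using congrArg (· ⬝ᵥ v) hclo

theorem dotProduct_last_eq_zero_of_sum_smul_eq_zero {m : ℕ} {x : Fin (m + 1) → n → 𝕜}
    {j : Fin (m + 1) → 𝕜} (hj : j (Fin.last m) ≠ 0) (hclo : ∑ i, j i • x i = 0)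
    (h : ∀ i : Fin m, x i.castSucc ⬝ᵥ v = 0) : x (Fin.last m) ⬝ᵥ v = 0 := by
  have := sum_smul_dotProduct_eq_zero (v := v) hclo
  simpa [Fin.sum_univ_castSucc, h, hj] using this

theorem eq_zero_of_sum_smul_eq_zero_of_forall_dotProduct_eq [Nonempty ι] [LinearOrder 𝕜]
    [IsStrictOrderedRing 𝕜] (hj : ∀ i, 0 < j i) (hclo : ∑ i, j i • x i = 0) {t : 𝕜}
    (h : ∀ i, x i ⬝ᵥ v = t) : t = 0 := by
  have hsum : (∑ i, j i) * t = 0 := by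
    simpa [h, Finset.sum_mul] using sum_smul_dotProduct_eq_zero (v := v) hclo
  have hpos : 0 < ∑ i, j i := Finset.sum_pos (fun i _ => hj i) Finset.univ_nonempty
  exact (mul_eq_zero.1 hsum).resolve_left hpos.ne'

end Closure

theorem det3_eq_zero_iff (a b c : Fin 3 → ℝ) :
    det3 a b c = 0 ↔ ∃ v ≠ 0, a ⬝ᵥ v = 0 ∧ b ⬝ᵥ v = 0 ∧ c ⬝ᵥ v = 0 := by
  rw [det3, det_transpose, ← exists_mulVec_eq_zero_iff]
  simp [funext_iff, Fin.forall_fin_succ]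

namespace Complex

theorem im_div_eq_zero_iff (p q : ℂ) : (p / q).im = 0 ↔ (p * conj q).im = 0 := by
  rw [div_eq_mul_inv, inv_def, ← mul_assoc, im_mul_ofReal, mul_eq_zero, inv_eq_zero,
    normSq_eq_zero]
  rcases eq_or_ne q 0 with rfl | hq
  · simp
  · simp [hq]

end Complex

noncomputable def circleMatrix (z : Fin 4 → ℂ) : Matrix (Fin 4) (Fin 4) ℝ :=
  Matrix.of fun i => ![Complex.normSq (z i), (z i).re, (z i).im, 1]

theorem det_circleMatrix (z : Fin 4 → ℂ) :
    (circleMatrix z).det =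
      ((z 3 - z 0) * (z 1 - z 2) * conj ((z 3 - z 2) * (z 1 - z 0))).im := by
  simp [det_succ_row_zero, Fin.sum_univ_succ, circleMatrix, Fin.succAbove,
    Complex.normSq_apply]
  ring

/-- The plane `{x | x ⬝ᵥ v = t}` pulls back under `Nvec` to the generalized circle
`k₀ |z|² + k₁ Re z + k₂ Im z + k₃ = 0` with these coefficients `k`. -/
def circleCoeffs (v : Fin 3 → ℝ) (t : ℝ) : Fin 4 → ℝ :=
  ![-v 2 - t, -2 * v 0, 2 * v 1, v 2 - t]

theorem circleCoeffs_surjective (k : Fin 4 → ℝ) :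
    ∃ v t, circleCoeffs v t = k :=
  ⟨![-k 1 / 2, k 2 / 2, (k 3 - k 0) / 2], -(k 0 + k 3) / 2, by
    ext i; fin_cases i <;> simp [circleCoeffs] <;> ring⟩

theorem circleCoeffs_eq_zero_iff {v : Fin 3 → ℝ} {t : ℝ} :
    circleCoeffs v t = 0 ↔ v = 0 ∧ t = 0 := by
  constructor
  · intro h
    have := congrFun h
    simp only [circleCoeffs, Pi.zero_apply, Fin.forall_fin_succ, cons_val_zero, cons_val_succ,
      neg_mul, neg_eq_zero, mul_eq_zero, OfNat.ofNat_ne_zero, false_or, cons_val_fin_one,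
      forall_const] at this
    obtain ⟨h0, h1, h2, h3⟩ := this
    refine ⟨?_, ?_⟩
    · ext i; fin_cases i <;> simp <;> linarith
    · linarith
  · rintro ⟨rfl, rfl⟩
    ext i; fin_cases i <;> simp [circleCoeffs]

theorem Nvec_dotProduct_eq_iff (z : ℂ) (v : Fin 3 → ℝ) (t : ℝ) :
    Nvec z ⬝ᵥ v = t ↔ ![Complex.normSq z, z.re, z.im, 1] ⬝ᵥ circleCoeffs v t = 0 := by
  have hpos : 0 < 1 + Complex.normSq z := by linarith [Complex.normSq_nonneg z]
  rw [dotProduct, dotProduct, Fin.sum_univ_three, Fin.sum_univ_four]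
  simp only [Nvec, circleCoeffs, Complex.sq_norm, cons_val_zero, cons_val_one, cons_val_two,
    cons_val_three, head_cons, tail_cons]
  rw [← sub_eq_zero]
  field_simp
  constructor <;> intro h <;> linarith

theorem circleMatrix_mulVec_circleCoeffs_eq_zero_iff (z : Fin 4 → ℂ) (v : Fin 3 → ℝ) (t : ℝ) :
    circleMatrix z *ᵥ circleCoeffs v t = 0 ↔ ∀ i, Nvec (z i) ⬝ᵥ v = t := by
  simp only [funext_iff, Nvec_dotProduct_eq_iff]
  rfl

theorem det_circleMatrix_eq_zero_iff (z : Fin 4 → ℂ) :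
    (circleMatrix z).det = 0 ↔ ∃ v ≠ 0, ∃ t, ∀ i, Nvec (z i) ⬝ᵥ v = t := by
  rw [← exists_mulVec_eq_zero_iff]
  constructor
  · rintro ⟨k, hk, hzero⟩
    obtain ⟨v, t, rfl⟩ := circleCoeffs_surjective k
    have hdot := (circleMatrix_mulVec_circleCoeffs_eq_zero_iff z v t).1 hzero
    refine ⟨v, fun hv => hk (circleCoeffs_eq_zero_iff.2 ⟨hv, ?_⟩), t, hdot⟩
    simpa [hv] using (hdot 0).symm
  · rintro ⟨v, hv, t, hdot⟩
    exact ⟨circleCoeffs v t, fun h => hv (circleCoeffs_eq_zero_iff.1 h).1,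
      (circleMatrix_mulVec_circleCoeffs_eq_zero_iff z v t).2 hdot⟩

theorem degenerate_iff_crossRatio_real_general
    (z : Fin 4 → ℂ)
    (j : Fin 4 → ℝ) (hj : ∀ i, 0 < j i)
    (hclo : ∑ i, j i • Nvec (z i) = 0) :
    det3 (Nvec (z 0)) (Nvec (z 1)) (Nvec (z 2)) = 0 ↔
      (((z 3 - z 0) * (z 1 - z 2)) / ((z 3 - z 2) * (z 1 - z 0))).im = 0 := by
  rw [det3_eq_zero_iff, Complex.im_div_eq_zero_iff, ← det_circleMatrix,
    det_circleMatrix_eq_zero_iff]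
  refine exists_congr fun v => and_congr_right fun _ => ⟨?_, ?_⟩
  · rintro ⟨h0, h1, h2⟩
    have h3 : Nvec (z 3) ⬝ᵥ v = 0 :=
      dotProduct_last_eq_zero_of_sum_smul_eq_zero (x := fun i => Nvec (z i)) (hj 3).ne' hclo
        (by simp [Fin.forall_fin_succ, h0, h1, h2])
    exact ⟨0, by simp [Fin.forall_fin_succ, h0, h1, h2, h3]⟩
  · rintro ⟨t, ht⟩
    obtain rfl := eq_zero_of_sum_smul_eq_zero_of_forall_dotProduct_eq hj hclo ht
    exact ⟨ht 0, ht 1, ht 2⟩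

/-- A closed configuration is a degenerate (zero-volume) tetrahedron iff its cross-ratio is
real. -/
theorem degenerate_iff_crossRatio_real
    (z : Fin 4 → ℂ) (hz : ∀ i k, i ≠ k → z i ≠ z k)
    (j : Fin 4 → ℝ) (hj : ∀ i, 0 < j i)
    (hclo : ∑ i, j i • Nvec (z i) = 0) :
    det3 (Nvec (z 0)) (Nvec (z 1)) (Nvec (z 2)) = 0 ↔
      (((z 3 - z 0) * (z 1 - z 2)) / ((z 3 - z 2) * (z 1 - z 0))).im = 0 :=
  degenerate_iff_crossRatio_real_general z j hj hclo
end

section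
/- Let N₁, N₂, N₃, N₄ ∈ ℝ³ be unit vectors and j₁,…,j₄ > 0 real numbers. Let G be the 3×3 matrix G = Σᵢ jᵢ (I₃ − Nᵢ Nᵢᵀ). Then det(G) = (j₁+j₂+j₃+j₄) · Σ_{1≤i<k≤4} jᵢ jₖ ‖Nᵢ × Nₖ‖² − Σ_{1≤i<k<m≤4} jᵢ jₖ jₘ (det(Nᵢ, Nₖ, Nₘ))². -/
open Matrix

/-- The orbit metric `G = Σᵢ jᵢ (I₃ − Nᵢ Nᵢᵀ)`. -/
noncomputable def Gmat (j : Fin 4 → ℝ) (N : Fin 4 → Fin 3 → ℝ) : Matrix (Fin 3) (Fin 3) ℝ :=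
  Matrix.of fun a b => ∑ i, j i * ((if a = b then (1 : ℝ) else 0) - N i a * N i b)

/-!
With `J = ∑ jᵢ` and `M = ∑ jᵢ Nᵢ Nᵢᵀ` we have `G = J • 1 - M`, so `det G` is the characteristic
polynomial of `M` at `J`: `J³ - J² tr M + J e₂(M) - det M`. Since the `Nᵢ` are unit vectors,
`tr M = J` and the first two terms cancel. Newton's and Lagrange's identities give
`2 e₂(M) = (tr M)² - tr (M²) = ∑ᵢₖ jᵢ jₖ ‖Nᵢ × Nₖ‖²`, and the Cauchy–Binet formula for `M = A D Aᵀ`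
gives `det M = ∑_{i<k<m} jᵢ jₖ jₘ det(Nᵢ, Nₖ, Nₘ)²`.
-/

open Finset Function Equiv

theorem Tuple.strictMono_comp_iff_eq_sort {n : ℕ} {α : Type*} [LinearOrder α] {f : Fin n → α}
    (hf : Injective f) {σ : Perm (Fin n)} : StrictMono (f ∘ σ) ↔ σ = Tuple.sort f := by
  rw [Tuple.eq_sort_iff]
  refine ⟨fun h => ⟨h.monotone, fun i j hij hfij => absurd hfij (h hij).ne⟩, fun h => ?_⟩
  exact h.1.strictMono_of_injective (hf.comp σ.injective)

/-- Every injective tuple is uniquely a strictly monotone tuple composed with a permutation. -/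
theorem Fintype.sum_eq_sum_strictMono_sum_perm {n : ℕ} {ι M : Type*} [Fintype ι] [LinearOrder ι]
    [AddCommMonoid M] (G : (Fin n → ι) → M) (hG : ∀ r, ¬ Injective r → G r = 0) :
    ∑ r, G r = ∑ s, if StrictMono s then ∑ σ : Perm (Fin n), G (s ∘ σ) else 0 := by
  have hreindex : ∀ σ : Perm (Fin n), ∑ s, (if StrictMono s then G (s ∘ σ) else 0) =
      ∑ r, if StrictMono (r ∘ σ.symm) then G r else 0 := fun σ => by
    rw [← (σ.arrowCongr (Equiv.refl ι)).sum_comp]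
    refine Fintype.sum_congr _ _ fun r => ?_
    have hcomp : σ.arrowCongr (Equiv.refl ι) r = r ∘ σ.symm := by
      ext; simp [Equiv.arrowCongr_apply]
    rw [hcomp, comp_assoc, σ.symm_comp_self, comp_id]
  simp_rw [ite_sum_zero]
  rw [Finset.sum_comm]
  simp_rw [hreindex]
  rw [Finset.sum_comm]
  refine Fintype.sum_congr _ _ fun r => ?_
  by_cases hr : Injective r
  · simp [Tuple.strictMono_comp_iff_eq_sort hr, ← Equiv.Perm.inv_def, inv_eq_iff_eq_inv]
  · simp [hG r hr]

theorem Fintype.sum_fin_three_fun {ι M : Type*} [Fintype ι] [AddCommMonoid M]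
    (G : (Fin 3 → ι) → M) : ∑ r, G r = ∑ i, ∑ k, ∑ m, G ![i, k, m] := by
  simp only [← (Fin.consEquiv fun _ => ι).sum_comp, Fintype.sum_prod_type, Fintype.sum_unique]
  refine Finset.sum_congr rfl fun i _ => Finset.sum_congr rfl fun k _ =>
    Finset.sum_congr rfl fun m _ => congrArg G ?_
  ext a; fin_cases a <;> rfl

theorem Fintype.sum_sum_eq_two_nsmul_sum_sum_lt {ι M : Type*} [Fintype ι] [LinearOrder ι]
    [AddCommMonoid M] (f : ι → ι → M) (hsymm : ∀ i k, f i k = f k i) (hdiag : ∀ i, f i i = 0) :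
    ∑ i, ∑ k, f i k = 2 • ∑ i, ∑ k, if i < k then f i k else 0 := by
  have hsplit : ∀ i k, f i k = (if i < k then f i k else 0) + (if k < i then f i k else 0) := by
    intro i k
    rcases lt_trichotomy i k with h | rfl | h
    · simp [h, h.not_gt]
    · simp [hdiag]
    · simp [h, h.not_gt]
  have hswap : ∑ i, ∑ k, (if k < i then f i k else 0) = ∑ i, ∑ k, if i < k then f i k else 0 := by
    rw [Finset.sum_comm]; simp_rw [hsymm]
  calc ∑ i, ∑ k, f i k
      = ∑ i, ∑ k, ((if i < k then f i k else 0) + (if k < i then f i k else 0)) := by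
        simp_rw [← hsplit]
    _ = _ := by simp_rw [sum_add_distrib, hswap, two_nsmul]

theorem Matrix.two_mul_det_smul_one_sub_fin_three {R : Type*} [CommRing R] (t : R)
    (M : Matrix (Fin 3) (Fin 3) R) :
    2 * (t • 1 - M).det =
      2 * t ^ 3 - 2 * t ^ 2 * trace M + t * (trace M ^ 2 - trace (M * M)) - 2 * M.det := by
  simp [det_fin_three, trace_fin_three, mul_apply, Fin.sum_univ_three]
  ring

theorem sum_perm_prod_mul_det_comp_perm {ι R : Type*} [CommRing R] (j : ι → R) {m : ℕ}
    (v : ι → Fin m → R) (s : Fin m → ι) :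
    ∑ σ : Perm (Fin m), (∏ a, j ((s ∘ σ) a) * v ((s ∘ σ) a) a) * (of fun a => v ((s ∘ σ) a)).det
      = (∏ a, j (s a)) * (of fun a => v (s a)).det ^ 2 := by
  set W : Matrix (Fin m) (Fin m) R := of fun a => v (s a)
  have hperm : ∀ σ : Perm (Fin m), (of fun a => v ((s ∘ σ) a)).det = Perm.sign σ * W.det :=
    fun σ => det_permute σ W
  have hweights : ∀ σ : Perm (Fin m), ∏ a, j ((s ∘ σ) a) = ∏ a, j (s a) :=
    fun σ => Equiv.prod_comp σ (fun a => j (s a))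
  calc _ = (∏ a, j (s a)) * W.det * ∑ σ : Perm (Fin m), (Perm.sign σ : R) * ∏ a, W (σ a) a := by
        rw [mul_sum]
        refine Fintype.sum_congr _ _ fun σ => ?_
        rw [prod_mul_distrib, hweights, hperm]
        simp only [Function.comp_apply, W, of_apply]
        ring
    _ = _ := by rw [← det_apply', sq, mul_assoc]

noncomputable def frameMatrix {ι n R : Type*} [Fintype ι] [CommRing R] (j : ι → R)
    (v : ι → n → R) : Matrix n n R :=
  ∑ i, j i • vecMulVec (v i) (v i)

section frameMatrix

variable {ι n R : Type*} [Fintype ι] [CommRing R] (j : ι → R)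

theorem frameMatrix_apply (v : ι → n → R) (a b : n) :
    frameMatrix j v a b = ∑ i, j i * (v i a * v i b) := by
  simp [frameMatrix, Matrix.sum_apply, vecMulVec_apply]

theorem trace_frameMatrix [Fintype n] (v : ι → n → R) :
    trace (frameMatrix j v) = ∑ i, j i * (v i ⬝ᵥ v i) := by
  simp [frameMatrix, trace_sum]

theorem trace_frameMatrix_mul_self [Fintype n] (v : ι → n → R) :
    trace (frameMatrix j v * frameMatrix j v) = ∑ i, ∑ k, j i * j k * (v i ⬝ᵥ v k) ^ 2 := by
  simp only [frameMatrix, sum_mul, mul_sum, trace_sum, smul_mul_smul, vecMulVec_mul_vecMulVec,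
    trace_smul, trace_vecMulVec, dotProduct_smul, smul_eq_mul]
  refine Fintype.sum_congr _ _ fun i => Fintype.sum_congr _ _ fun k => ?_
  rw [dotProduct_comm (v i) (v k)]; ring

theorem trace_sq_sub_trace_mul_self_frameMatrix (v : ι → Fin 3 → R) :
    trace (frameMatrix j v) ^ 2 - trace (frameMatrix j v * frameMatrix j v) =
      ∑ i, ∑ k, j i * j k * (v i ⨯₃ v k ⬝ᵥ v i ⨯₃ v k) := by
  rw [trace_frameMatrix, trace_frameMatrix_mul_self, sq, sum_mul_sum, ← sum_sub_distrib]
  refine Fintype.sum_congr _ _ fun i => ?_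
  rw [← sum_sub_distrib]
  refine Fintype.sum_congr _ _ fun k => ?_
  rw [cross_dot_cross, dotProduct_comm (v k) (v i)]; ring

theorem det_frameMatrix_eq_sum {m : ℕ} (v : ι → Fin m → R) :
    (frameMatrix j v).det =
      ∑ r : Fin m → ι, (∏ a, j (r a) * v (r a) a) * (of fun a => v (r a)).det := by
  classical
  have hrows : frameMatrix j v = of fun a => ∑ i, (j i * v i a) • v i := by
    ext a b; simp [frameMatrix_apply, mul_assoc]
  have hexpand := (detRowAlternating (n := Fin m) (R := R)).toMultilinearMap.map_sum
    (fun a i => (j i * v i a) • v i)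
  simp only [AlternatingMap.coe_multilinearMap, MultilinearMap.map_smul_univ] at hexpand
  rw [hrows]
  exact hexpand

/-- The Cauchy–Binet formula for `A D Aᵀ`, with `A` the matrix of columns `v i` and
`D = diagonal j`. -/
theorem det_frameMatrix [LinearOrder ι] {m : ℕ} (v : ι → Fin m → R) :
    (frameMatrix j v).det = ∑ s : Fin m → ι,
      if StrictMono s then (∏ a, j (s a)) * (of fun a => v (s a)).det ^ 2 else 0 := by
  rw [det_frameMatrix_eq_sum, Fintype.sum_eq_sum_strictMono_sum_perm]
  · simp_rw [sum_perm_prod_mul_det_comp_perm]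
  · intro r hr
    obtain ⟨a, b, hab, hne⟩ : ∃ a b, r a = r b ∧ a ≠ b := by
      simpa [Injective] using hr
    rw [det_zero_of_row_eq hne (congrArg v hab), mul_zero]

theorem det_frameMatrix_fin_three [LinearOrder ι] (v : ι → Fin 3 → R) :
    (frameMatrix j v).det = ∑ i, ∑ k, ∑ m, if i < k ∧ k < m then
      j i * j k * j m * (of ![v i, v k, v m]).det ^ 2 else 0 := by
  rw [det_frameMatrix, Fintype.sum_fin_three_fun]
  refine Fintype.sum_congr _ _ fun i => Fintype.sum_congr _ _ fun k =>
    Fintype.sum_congr _ _ fun m => ?_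
  have hmono : StrictMono ![i, k, m] ↔ i < k ∧ k < m := by
    simp [Fin.strictMono_iff_lt_succ, Fin.forall_fin_two]
  have hrows : (of fun a => v (![i, k, m] a)) = of ![v i, v k, v m] := by
    ext a; fin_cases a <;> rfl
  simp only [hmono, hrows, Fin.prod_univ_three]
  rfl

end frameMatrix

theorem Gmat_eq_smul_one_sub_frameMatrix (j : Fin 4 → ℝ) (N : Fin 4 → Fin 3 → ℝ) :
    Gmat j N = (∑ i, j i) • 1 - frameMatrix j N := by
  ext a b
  simp [Gmat, frameMatrix_apply, one_apply, mul_sub, sum_sub_distrib]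

theorem det3_eq_det (a b c : Fin 3 → ℝ) : det3 a b c = (of ![a, b, c]).det := det_transpose _

theorem det_orbit_metric_general
    (N : Fin 4 → Fin 3 → ℝ) (hN : ∀ i, ∑ x, N i x ^ 2 = 1)
    (j : Fin 4 → ℝ) :
    (Gmat j N).det =
      (∑ i, j i) *
        (∑ i, ∑ k, if i < k then j i * j k * (∑ x, ((N i) ⨯₃ (N k)) x ^ 2) else 0)
      - ∑ i, ∑ k, ∑ m, if i < k ∧ k < m then
          j i * j k * j m * det3 (N i) (N k) (N m) ^ 2 else 0 := by
  have hnorm : ∀ v : Fin 3 → ℝ, v ⬝ᵥ v = ∑ x, v x ^ 2 := fun v => by simp [dotProduct, sq]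
  have htrace : trace (frameMatrix j N) = ∑ i, j i := by
    simp [trace_frameMatrix, hnorm, hN]
  have hpairs := trace_sq_sub_trace_mul_self_frameMatrix j N
  rw [Fintype.sum_sum_eq_two_nsmul_sum_sum_lt _
    (fun i k => by
      rw [← cross_anticomm (N i) (N k), neg_dotProduct, dotProduct_neg, neg_neg, mul_comm (j i)])
    (fun i => by simp)] at hpairs
  have hchar := two_mul_det_smul_one_sub_fin_three (∑ i, j i) (frameMatrix j N)
  rw [← Gmat_eq_smul_one_sub_frameMatrix, hpairs, htrace, det_frameMatrix_fin_three] at hchar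
  simp only [← hnorm, det3_eq_det]
  linear_combination hchar / 2

/-- The determinant of the orbit metric `G`:
`det G = (Σᵢ jᵢ) Σ_{i<k} jᵢ jₖ ‖Nᵢ × Nₖ‖² − Σ_{i<k<m} jᵢ jₖ jₘ det(Nᵢ,Nₖ,Nₘ)²`. -/
theorem det_orbit_metric
    (N : Fin 4 → Fin 3 → ℝ) (hN : ∀ i, ∑ x, N i x ^ 2 = 1)
    (j : Fin 4 → ℝ) (hj : ∀ i, 0 < j i) :
    (Gmat j N).det =
      (∑ i, j i) *
        (∑ i, ∑ k, if i < k then j i * j k * (∑ x, ((N i) ⨯₃ (N k)) x ^ 2) else 0)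
      - ∑ i, ∑ k, ∑ m, if i < k ∧ k < m then
          j i * j k * j m * det3 (N i) (N k) (N m) ^ 2 else 0 :=
  det_orbit_metric_general N hN j
end

section
/- Let d₁, d₂, d₃ be nonnegative integers and set n₁ = d₂+d₃, n₂ = d₁+d₃, n₃ = d₁+d₂. Let P ∈ ℂ[z₁,z₂,z₃] be a polynomial such that: (i) the degree of P in zᵢ is at most nᵢ for each i; (ii) P(z₁+a, z₂+a, z₃+a) = P(z₁,z₂,z₃) for all a, z₁, z₂, z₃ ∈ ℂ; (iii) P(λz₁, λz₂, λz₃) = λ^{d₁+d₂+d₃} P(z₁,z₂,z₃) for all λ, zᵢ ∈ ℂ; (iv) z₁^{n₁} z₂^{n₂} z₃^{n₃} · P(−1/z₁, −1/z₂, −1/z₃) = P(z₁,z₂,z₃) for all nonzero z₁, z₂, z₃ ∈ ℂ. Then there exists c ∈ ℂ such that P(z₁,z₂,z₃) = c·(z₁−z₂)^{d₃}(z₂−z₃)^{d₁}(z₃−z₁)^{d₂}. (The space of 3-valent SL(2,ℂ)-invariant holomorphic sections is one-dimensional.) -/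
/-!
Let `D = d₁ + d₂ + d₃`. Translating `z₃` to `0` and scaling `z₂` to `1` reduces everything to
`p(t) = P(t, 1, 0)`, of degree `≤ d₂ + d₃`. Scaling gives `p(t) = t^D P(1, 1/t, 0)`, and since
`P(1, s, 0)` has degree `≤ d₁ + d₃` this forces `t^{d₂} ∣ p`. Translating by `-1` and then scaling
gives `p(t) = (t-1)^D P(1, 0, -1/(t-1))`, forcing `(t-1)^{d₃} ∣ p`. By degree,
`p = c t^{d₂} (t-1)^{d₃}`; undoing the scaling recovers `P` off `z₂ = z₃`, and continuity does
the rest.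
-/

open Polynomial

namespace Polynomial

variable {K : Type*} [Field K]

theorem eval_reflect_of_ne_zero {N : ℕ} {f : K[X]} (hf : f.natDegree ≤ N) {t : K} (ht : t ≠ 0) :
    (reflect N f).eval t = t ^ N * f.eval t⁻¹ := by
  let _ : Invertible t⁻¹ := invertibleOfNonzero (inv_ne_zero ht)
  have h := eval₂_reflect_mul_pow (RingHom.id K) t⁻¹ N f hf
  rw [invOf_eq_inv, inv_inv] at h
  simp only [eval₂_id] at h
  rw [← h, inv_pow]
  field_simp

theorem X_sub_C_pow_dvd_of_eval_eq [Infinite K] {p q : K[X]} {a : K} {k m : ℕ}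
    (hq : q.natDegree ≤ m) (h : ∀ t ≠ a, p.eval t = (t - a) ^ (k + m) * q.eval (t - a)⁻¹) :
    (X - C a) ^ k ∣ p := by
  refine ⟨(reflect m q).comp (X - C a), eq_of_infinite_eval_eq _ _ ?_⟩
  refine (Set.finite_singleton a).infinite_compl.mono fun t ht => ?_
  have hta : t - a ≠ 0 := sub_ne_zero.mpr ht
  simp only [Set.mem_ofPred_eq, eval_mul, eval_pow, eval_comp, eval_sub, eval_X, eval_C,
    eval_reflect_of_ne_zero hq hta, h t ht, pow_add, mul_assoc]

theorem exists_eq_C_mul_X_sub_C_pow_mul_X_sub_C_pow {p : K[X]} {a b : K} {k l : ℕ} (hab : a ≠ b)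
    (hp : p.natDegree ≤ k + l) (ha : (X - C a) ^ k ∣ p) (hb : (X - C b) ^ l ∣ p) :
    ∃ c, p = C c * ((X - C a) ^ k * (X - C b) ^ l) := by
  have hcop : IsCoprime ((X - C a) ^ k) ((X - C b) ^ l) :=
    (isCoprime_X_sub_C_of_isUnit_sub (sub_ne_zero.mpr hab).isUnit).pow
  have hmonic : ((X - C a) ^ k * (X - C b) ^ l).Monic :=
    ((monic_X_sub_C a).pow k).mul ((monic_X_sub_C b).pow l)
  refine ⟨p.leadingCoeff, eq_leadingCoeff_mul_of_monic_of_dvd_of_natDegree_le hmonic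
    (hcop.mul_dvd ha hb) ?_⟩
  rwa [((monic_X_sub_C a).pow k).natDegree_mul ((monic_X_sub_C b).pow l), natDegree_pow,
    natDegree_pow, natDegree_X_sub_C, natDegree_X_sub_C, mul_one, mul_one]

end Polynomial

namespace MvPolynomial

variable {σ R : Type*} [CommSemiring R]

theorem eval_polynomial_eval_aeval (P : MvPolynomial σ R) (v : σ → R[X]) (t : R) :
    (aeval v P).eval t = eval (fun i => (v i).eval t) P := by
  have hC : (Polynomial.evalRingHom t).comp Polynomial.C = RingHom.id R :=
    RingHom.ext fun _ => Polynomial.eval_C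
  rw [aeval_def, Polynomial.algebraMap_eq, polynomial_eval_eval₂, hC]
  rfl

theorem eval_polynomial_eval_aeval_vec (P : MvPolynomial (Fin 3) R) (a b c : R[X]) (t : R) :
    (aeval ![a, b, c] P).eval t = eval ![a.eval t, b.eval t, c.eval t] P := by
  rw [eval_polynomial_eval_aeval]
  congr
  ext i
  fin_cases i <;> rfl

theorem natDegree_aeval_le_degreeOf_mul (P : MvPolynomial σ R) (i : σ) (v : σ → R[X])
    (hv : ∀ j ≠ i, (v j).natDegree = 0) :
    (aeval v P).natDegree ≤ P.degreeOf i * (v i).natDegree := by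
  conv_lhs => rw [P.as_sum, map_sum]
  refine natDegree_sum_le_of_forall_le _ _ fun m hm => ?_
  rw [aeval_monomial, Polynomial.algebraMap_eq, Finsupp.prod]
  calc _ ≤ (∏ j ∈ m.support, v j ^ m j).natDegree := natDegree_C_mul_le _ _
    _ ≤ ∑ j ∈ m.support, (v j ^ m j).natDegree := natDegree_prod_le _ _
    _ ≤ ∑ j ∈ m.support, m j * (v j).natDegree := Finset.sum_le_sum fun j _ => natDegree_pow_le
    _ = m i * (v i).natDegree := by
      refine Finset.sum_eq_single i (fun j _ hj => by rw [hv j hj, mul_zero]) fun hi => ?_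
      rw [Finsupp.notMem_support_iff.mp hi, zero_mul]
    _ ≤ P.degreeOf i * (v i).natDegree := Nat.mul_le_mul_right _ (monomial_le_degreeOf i hm)

theorem natDegree_aeval_le_degreeOf (P : MvPolynomial σ R) (i : σ) (v : σ → R[X])
    (hi : (v i).natDegree ≤ 1) (hv : ∀ j ≠ i, (v j).natDegree = 0) :
    (aeval v P).natDegree ≤ P.degreeOf i :=
  (natDegree_aeval_le_degreeOf_mul P i v hv).trans (by simpa using Nat.mul_le_mul_left _ hi)

end MvPolynomial

theorem exists_eval_line_eq {d₁ d₂ d₃ : ℕ} {P : MvPolynomial (Fin 3) ℂ}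
    (hdeg0 : P.degreeOf 0 ≤ d₂ + d₃) (hdeg1 : P.degreeOf 1 ≤ d₁ + d₃)
    (hdeg2 : P.degreeOf 2 ≤ d₁ + d₂)
    (htrans : ∀ a z₁ z₂ z₃ : ℂ,
      MvPolynomial.eval ![z₁ + a, z₂ + a, z₃ + a] P = MvPolynomial.eval ![z₁, z₂, z₃] P)
    (hscale : ∀ lam z₁ z₂ z₃ : ℂ,
      MvPolynomial.eval ![lam * z₁, lam * z₂, lam * z₃] P =
        lam ^ (d₁ + d₂ + d₃) * MvPolynomial.eval ![z₁, z₂, z₃] P) :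
    ∃ c : ℂ, ∀ t : ℂ, MvPolynomial.eval ![t, 1, 0] P = c * (t ^ d₂ * (t - 1) ^ d₃) := by
  set p : ℂ[X] := MvPolynomial.aeval ![X, 1, 0] P
  have hp : ∀ t, p.eval t = MvPolynomial.eval ![t, 1, 0] P := fun t => by
    simp [p, MvPolynomial.eval_polynomial_eval_aeval_vec]
  have hdvd0 : (X - C 0) ^ d₂ ∣ p := by
    refine X_sub_C_pow_dvd_of_eval_eq (q := MvPolynomial.aeval ![1, X, 0] P) (m := d₁ + d₃)
      ((P.natDegree_aeval_le_degreeOf _ _ (by simp)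
        (by intro j hj; fin_cases j <;> simp_all)).trans hdeg1) fun t ht => ?_
    rw [hp, MvPolynomial.eval_polynomial_eval_aeval_vec, sub_zero,
      show d₂ + (d₁ + d₃) = d₁ + d₂ + d₃ by ring]
    simpa [mul_inv_cancel₀ ht] using hscale t 1 t⁻¹ 0
  have hdvd1 : (X - C 1) ^ d₃ ∣ p := by
    refine X_sub_C_pow_dvd_of_eval_eq (q := MvPolynomial.aeval ![1, 0, -X] P) (m := d₁ + d₂)
      ((P.natDegree_aeval_le_degreeOf _ _ (by simp)
        (by intro j hj; fin_cases j <;> simp_all)).trans hdeg2) fun t ht => ?_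
    have h1 := htrans 1 (t - 1) 0 (-1)
    have h2 := hscale (t - 1) 1 0 (-(t - 1)⁻¹)
    simp only [sub_add_cancel, zero_add, neg_add_cancel] at h1
    simp only [mul_one, mul_zero, mul_neg, mul_inv_cancel₀ (sub_ne_zero.mpr ht)] at h2
    rw [hp, MvPolynomial.eval_polynomial_eval_aeval_vec,
      show d₃ + (d₁ + d₂) = d₁ + d₂ + d₃ by ring, h1, h2]
    simp
  obtain ⟨c, hc⟩ := exists_eq_C_mul_X_sub_C_pow_mul_X_sub_C_pow zero_ne_one
    ((P.natDegree_aeval_le_degreeOf _ _ (by simp)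
      (by intro j hj; fin_cases j <;> simp_all)).trans hdeg0) hdvd0 hdvd1
  exact ⟨c, fun t => by rw [← hp]; simpa using congr(eval t $hc)⟩

theorem eval_eq_of_eval_line_eq {d₁ d₂ d₃ : ℕ} {P : MvPolynomial (Fin 3) ℂ} {c : ℂ}
    (htrans : ∀ a z₁ z₂ z₃ : ℂ,
      MvPolynomial.eval ![z₁ + a, z₂ + a, z₃ + a] P = MvPolynomial.eval ![z₁, z₂, z₃] P)
    (hscale : ∀ lam z₁ z₂ z₃ : ℂ,
      MvPolynomial.eval ![lam * z₁, lam * z₂, lam * z₃] P =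
        lam ^ (d₁ + d₂ + d₃) * MvPolynomial.eval ![z₁, z₂, z₃] P)
    (hline : ∀ t : ℂ, MvPolynomial.eval ![t, 1, 0] P = c * (t ^ d₂ * (t - 1) ^ d₃))
    {z₁ z₂ z₃ : ℂ} (h₂₃ : z₂ ≠ z₃) :
    MvPolynomial.eval ![z₁, z₂, z₃] P =
      c * (-1) ^ d₂ * (z₁ - z₂) ^ d₃ * (z₂ - z₃) ^ d₁ * (z₃ - z₁) ^ d₂ := by
  have hs : z₂ - z₃ ≠ 0 := sub_ne_zero.mpr h₂₃
  have h1 := htrans z₃ (z₁ - z₃) (z₂ - z₃) 0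
  have h2 := hscale (z₂ - z₃) ((z₁ - z₃) / (z₂ - z₃)) 1 0
  simp only [sub_add_cancel, zero_add, mul_one, mul_zero, mul_div_cancel₀ _ hs] at h1 h2
  have hdehom : (z₂ - z₃) ^ (d₁ + d₂ + d₃) *
      (((z₁ - z₃) / (z₂ - z₃)) ^ d₂ * ((z₁ - z₃) / (z₂ - z₃) - 1) ^ d₃) =
      (z₂ - z₃) ^ d₁ * (z₁ - z₃) ^ d₂ * (z₁ - z₂) ^ d₃ := by
    rw [div_sub_one hs, div_pow, div_pow]
    field_simp
    ring
  have hsign : ((-1 : ℂ)) ^ d₂ * (-1) ^ d₂ = 1 := by rw [← mul_pow]; norm_num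
  rw [h1, h2, hline, mul_left_comm, hdehom, ← neg_sub z₁ z₃, neg_pow (z₁ - z₃)]
  linear_combination -(c * (z₂ - z₃) ^ d₁ * (z₁ - z₃) ^ d₂ * (z₁ - z₂) ^ d₃) * hsign

theorem trivalent_invariant_section_unique_general
    (d₁ d₂ d₃ : ℕ) (P : MvPolynomial (Fin 3) ℂ)
    (hdeg0 : MvPolynomial.degreeOf 0 P ≤ d₂ + d₃)
    (hdeg1 : MvPolynomial.degreeOf 1 P ≤ d₁ + d₃)
    (hdeg2 : MvPolynomial.degreeOf 2 P ≤ d₁ + d₂)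
    (htrans : ∀ a z₁ z₂ z₃ : ℂ,
      MvPolynomial.eval ![z₁ + a, z₂ + a, z₃ + a] P = MvPolynomial.eval ![z₁, z₂, z₃] P)
    (hscale : ∀ lam z₁ z₂ z₃ : ℂ,
      MvPolynomial.eval ![lam * z₁, lam * z₂, lam * z₃] P =
        lam ^ (d₁ + d₂ + d₃) * MvPolynomial.eval ![z₁, z₂, z₃] P) :
    ∃ c : ℂ, ∀ z₁ z₂ z₃ : ℂ,
      MvPolynomial.eval ![z₁, z₂, z₃] P =
        c * (z₁ - z₂) ^ d₃ * (z₂ - z₃) ^ d₁ * (z₃ - z₁) ^ d₂ := by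
  obtain ⟨c, hline⟩ := exists_eval_line_eq hdeg0 hdeg1 hdeg2 htrans hscale
  refine ⟨c * (-1) ^ d₂, fun z₁ z₂ z₃ => ?_⟩
  have hoff : ∀ w ≠ z₃, MvPolynomial.eval ![z₁, w, z₃] P =
      c * (-1) ^ d₂ * (z₁ - w) ^ d₃ * (w - z₃) ^ d₁ * (z₃ - z₁) ^ d₂ :=
    fun _ hw => eval_eq_of_eval_line_eq htrans hscale hline hw
  exact congrFun (Continuous.ext_on (dense_compl_singleton z₃)
    (f := fun w => MvPolynomial.eval ![z₁, w, z₃] P)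
    ((MvPolynomial.continuous_eval P).comp (by fun_prop)) (by fun_prop) hoff) z₂

/-- The space of 3-valent SL(2,ℂ)-invariant holomorphic sections is one-dimensional: a
polynomial in three variables of degree `≤ nᵢ = Σd − dᵢ` in `zᵢ`, invariant under translations,
homogeneous of degree `d₁+d₂+d₃` under dilations and invariant under inversion, is a multiple
of `(z₁−z₂)^{d₃}(z₂−z₃)^{d₁}(z₃−z₁)^{d₂}`. -/
theorem trivalent_invariant_section_unique
    (d₁ d₂ d₃ : ℕ) (P : MvPolynomial (Fin 3) ℂ)
    (hdeg0 : MvPolynomial.degreeOf 0 P ≤ d₂ + d₃)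
    (hdeg1 : MvPolynomial.degreeOf 1 P ≤ d₁ + d₃)
    (hdeg2 : MvPolynomial.degreeOf 2 P ≤ d₁ + d₂)
    (htrans : ∀ a z₁ z₂ z₃ : ℂ,
      MvPolynomial.eval ![z₁ + a, z₂ + a, z₃ + a] P = MvPolynomial.eval ![z₁, z₂, z₃] P)
    (hscale : ∀ lam z₁ z₂ z₃ : ℂ,
      MvPolynomial.eval ![lam * z₁, lam * z₂, lam * z₃] P =
        lam ^ (d₁ + d₂ + d₃) * MvPolynomial.eval ![z₁, z₂, z₃] P)
    (hinv : ∀ z₁ z₂ z₃ : ℂ, z₁ ≠ 0 → z₂ ≠ 0 → z₃ ≠ 0 →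
      z₁ ^ (d₂ + d₃) * z₂ ^ (d₁ + d₃) * z₃ ^ (d₁ + d₂) *
          MvPolynomial.eval ![-1 / z₁, -1 / z₂, -1 / z₃] P =
        MvPolynomial.eval ![z₁, z₂, z₃] P) :
    ∃ c : ℂ, ∀ z₁ z₂ z₃ : ℂ,
      MvPolynomial.eval ![z₁, z₂, z₃] P =
        c * (z₁ - z₂) ^ d₃ * (z₂ - z₃) ^ d₁ * (z₃ - z₁) ^ d₂ :=
  trivalent_invariant_section_unique_general d₁ d₂ d₃ P hdeg0 hdeg1 hdeg2 htrans hscale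
end
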